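/- arXiv:1011.2266 — 9 statements merged into one kernel-verified Lean document; each statement's English description precedes it below -/
import Mathlib

section
/- Let X be a convexity space. For all points x, y ∈ X, the set C(x,y) \ {y} is connected. -/
/-- A set `A` is convex with respect to the map `C` assigning to each pair of points
`x, y` the set `C x y` ("the minimal connected set joining them") if `C u v ⊆ A`
whenever `u, v ∈ A`. -/
def ConvexWRT {X : Type*} (C : X → X → Set X) (A : Set X) : Prop :=
  ∀ u ∈ A, ∀ v ∈ A, C u v ⊆ A

/-- A convexity space is a Hausdorff topological space `X` together with a map
`C : X → X → Set X` which is continuous as a map `X × X → 𝒫(X)` (where `𝒫(X)` carries the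
topology generated by the sets `{C | C ⊆ U}`, `U` open), such that
(C1) each `C x y` is convex, (C2) each `C x y` is minimal among the connected subsets of `X`
containing both `x` and `y`, and (C3) `X` has a basis of convex open sets. -/
structure IsConvexitySpace {X : Type*} [TopologicalSpace X] [T2Space X]
    (C : X → X → Set X) : Prop where
  /-- `C x y` contains `x`. -/
  mem_left : ∀ x y : X, x ∈ C x y
  /-- `C x y` contains `y`. -/
  mem_right : ∀ x y : X, y ∈ C x y
  /-- `C x y` is connected. -/
  preconnected : ∀ x y : X, IsPreconnected (C x y)
  /-- (C1): `C x y` is convex. -/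
  convex : ∀ x y : X, ConvexWRT C (C x y)
  /-- (C2): `C x y` is minimal among the connected subsets of `X` containing `x` and `y`:
  no proper subset of `C x y` containing `x` and `y` is connected. -/
  minimal : ∀ x y : X, ∀ A : Set X, A ⊆ C x y → x ∈ A → y ∈ A →
    IsPreconnected A → A = C x y
  /-- Continuity of `(x, y) ↦ C x y`: for every open `W ⊇ C x y` there are open
  neighbourhoods `V` of `x` and `V'` of `y` with `C x' y' ⊆ W` for `x' ∈ V`, `y' ∈ V'`. -/
  continuity : ∀ x y : X, ∀ W : Set X, IsOpen W → C x y ⊆ W →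
    ∃ V V' : Set X, IsOpen V ∧ IsOpen V' ∧ x ∈ V ∧ y ∈ V' ∧
      ∀ x' ∈ V, ∀ y' ∈ V', C x' y' ⊆ W
  /-- (C3): `X` has a basis of convex open sets. -/
  basis : ∀ x : X, ∀ W : Set X, IsOpen W → x ∈ W →
    ∃ V : Set X, IsOpen V ∧ x ∈ V ∧ V ⊆ W ∧ ConvexWRT C V

/-!
Write `z ≤ y` for `z ∈ C x y`, with `x` fixed. By convexity `C x z ⊆ C x y` whenever `z ≤ y`,
so `C x y \ {y}` is the union of the connected sets `C x z` (all containing `x`) over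
`z ∈ C x y \ {y}`, provided `≤` is antisymmetric.

Antisymmetry: if `z ≤ y`, `y ≤ z` and `x ≠ y`, the set `G` of points of `C x y` strictly below `y`
contains `x`, misses `y`, is connected (it is down-closed) and is relatively open in `C x y` by
continuity of `C`. Connectedness of `C x y` gives a point `p ∈ C x y \ G` in the closure of `G`;
then `C x p = C x y`, and `G ∪ {p}` is a connected subset of `C x p` joining `x` to `p`, hence all
of `C x p` by minimality. So `y` and `z`, which lie in `C x y` but not in `G`, both equal `p`.
-/

theorem IsPreconnected.exists_mem_closure_inter_of_not_subset {X : Type*} [TopologicalSpace X]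
    {s u : Set X} (hs : IsPreconnected s) (hu : IsOpen u) (hsu : (s ∩ u).Nonempty)
    (hnot : ¬s ⊆ u) : ∃ p ∈ s, p ∉ u ∧ p ∈ closure (s ∩ u) := by
  by_contra! h
  obtain ⟨q, hqs, hqu⟩ := Set.not_subset.mp hnot
  have hcover : s ⊆ u ∪ (closure (s ∩ u))ᶜ := fun a ha =>
    (em (a ∈ u)).imp id (h a ha)
  obtain ⟨a, has, hau, hacl⟩ := hs u _ hu isClosed_closure.isOpen_compl hcover hsu
    ⟨q, hqs, h q hqs hqu⟩
  exact hacl (subset_closure ⟨has, hau⟩)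

namespace IsConvexitySpace

variable {X : Type*} [TopologicalSpace X] [T2Space X] {C : X → X → Set X}

theorem self_eq_singleton (hC : IsConvexitySpace C) (x : X) : C x x = {x} :=
  (hC.minimal x x {x} (Set.singleton_subset_iff.mpr (hC.mem_left x x)) rfl rfl
    isPreconnected_singleton).symm

theorem subset_of_mem (hC : IsConvexitySpace C) {x y z : X} (hz : z ∈ C x y) :
    C x z ⊆ C x y :=
  hC.convex x y x (hC.mem_left x y) z hz

theorem isOpen_setOf_notMem (hC : IsConvexitySpace C) (x y : X) :
    IsOpen {w | y ∉ C x w} := by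
  refine isOpen_iff_forall_mem_open.mpr fun w hw => ?_
  obtain ⟨V, V', -, hV', hxV, hwV', hsub⟩ :=
    hC.continuity x w {y}ᶜ isOpen_compl_singleton (Set.subset_compl_singleton_iff.mpr hw)
  exact ⟨V', fun w' hw' hy => hsub x hxV w' hw' hy rfl, hV', hwV'⟩

theorem isPreconnected_of_forall_subset (hC : IsConvexitySpace C) {x : X} {S : Set X}
    (hS : ∀ w ∈ S, C x w ⊆ S) : IsPreconnected S :=
  isPreconnected_of_forall x fun w hw =>
    ⟨C x w, hS w hw, hC.mem_left x w, hC.mem_right x w, hC.preconnected x w⟩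

theorem eq_of_mem_of_mem (hC : IsConvexitySpace C) {x y z : X} (hz : z ∈ C x y)
    (hy : y ∈ C x z) : y = z := by
  rcases eq_or_ne x y with rfl | hxy
  · rw [hC.self_eq_singleton] at hz
    exact hz.symm
  set u : Set X := {w | y ∉ C x w}
  set G := C x y ∩ u
  have hxG : x ∈ G := ⟨hC.mem_left x y, by simpa [u, hC.self_eq_singleton] using hxy.symm⟩
  have hyu : y ∉ u := fun h => h (hC.mem_right x y)
  have hG : IsPreconnected G := hC.isPreconnected_of_forall_subset fun w ⟨hwy, hwu⟩ v hv =>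
    ⟨hC.subset_of_mem hwy hv, fun hyv => hwu (hC.subset_of_mem hv hyv)⟩
  obtain ⟨p, hpC, hpu, hpG⟩ := (hC.preconnected x y).exists_mem_closure_inter_of_not_subset
    (hC.isOpen_setOf_notMem x y) ⟨x, hxG⟩ fun h => hyu (h (hC.mem_right x y))
  have hCp : C x p = C x y := (hC.subset_of_mem hpC).antisymm (hC.subset_of_mem (not_not.mp hpu))
  have hGp : insert p G = C x y := hCp ▸ hC.minimal x p (insert p G)
    (hCp ▸ Set.insert_subset hpC Set.inter_subset_left) (Set.mem_insert_of_mem p hxG)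
    (Set.mem_insert p G)
    (hG.subset_closure (Set.subset_insert p G) (Set.insert_subset hpG subset_closure))
  have hy_eq : y = p := (hGp ▸ hC.mem_right x y : y ∈ insert p G).resolve_right fun h => hyu h.2
  have hz_eq : z = p := (hGp ▸ hz : z ∈ insert p G).resolve_right fun h => h.2 hy
  exact hy_eq.trans hz_eq.symm

end IsConvexitySpace

/-- Lemma 1: Let `X` be a convexity space. For all points `x, y ∈ X`,
the set `C(x,y) \ {y}` is connected. -/
theorem stmt_0 {X : Type*} [TopologicalSpace X] [T2Space X] {C : X → X → Set X}
    (hC : IsConvexitySpace C) (x y : X) :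
    IsPreconnected (C x y \ {y}) :=
  hC.isPreconnected_of_forall_subset fun _ ⟨hwy, hw⟩ =>
    Set.subset_sdiff_singleton (hC.subset_of_mem hwy) fun hyw =>
      hw (hC.eq_of_mem_of_mem hwy hyw).symm
end

section
/- Let X be a convexity space and x, y ∈ X. The relation defined for z, t ∈ C(x,y) by z ≤ t iff z ∈ C(x,t) is a linear order on C(x,y); moreover, for z, t ∈ C(x,y) one has z ∈ C(x,t) if and only if t ∈ C(z,y). -/
open Set

section

variable {X : Type*} [TopologicalSpace X]

theorem IsPreconnected.insert_inter_of_separated {s u v : Set X} {t : X} (hs : IsPreconnected s)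
    (ht : t ∈ s) (hu : IsOpen u) (hv : IsOpen v) (hsuv : s \ {t} ⊆ u ∪ v)
    (huv : s \ {t} ∩ (u ∩ v) = ∅) : IsPreconnected (insert t (s ∩ u)) := by
  intro u₁ u₂ hu₁ hu₂ hcover hne₁ hne₂
  wlog ht₁ : t ∈ u₁ generalizing u₁ u₂
  · have ht₂ : t ∈ u₂ := (hcover (mem_insert t _)).resolve_left ht₁
    rw [inter_comm u₁ u₂]
    exact this u₂ u₁ hu₂ hu₁ (by rwa [union_comm]) hne₂ hne₁ ht₂
  by_cases ht₂ : t ∈ u₂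
  · exact ⟨t, mem_insert t _, ht₁, ht₂⟩
  obtain ⟨p, hp, hpu₂⟩ := hne₂
  have hpsu : p ∈ s ∩ u := hp.resolve_left (by rintro rfl; exact ht₂ hpu₂)
  have hs_cover : s ⊆ (u₁ ∪ v) ∪ (u₂ ∩ u) := by
    intro q hq
    rcases eq_or_ne q t with rfl | hqt
    · exact Or.inl (Or.inl ht₁)
    rcases hsuv ⟨hq, hqt⟩ with hqu | hqv
    · rcases hcover (Or.inr ⟨hq, hqu⟩) with hq₁ | hq₂
      exacts [Or.inl (Or.inl hq₁), Or.inr ⟨hq₂, hqu⟩]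
    · exact Or.inl (Or.inr hqv)
  obtain ⟨q, hqs, hq₁ | hqv, hq₂, hqu⟩ :=
    hs _ _ (hu₁.union hv) (hu₂.inter hu) hs_cover ⟨t, ht, Or.inl ht₁⟩ ⟨p, hpsu.1, hpu₂, hpsu.2⟩
  · exact ⟨q, Or.inr ⟨hqs, hqu⟩, hq₁, hq₂⟩
  · have hqt : q ≠ t := by rintro rfl; exact ht₂ hq₂
    exact absurd huv (nonempty_iff_ne_empty.1 ⟨q, ⟨hqs, hqt⟩, hqu, hqv⟩)

namespace IsConvexitySpace

variable [T2Space X] {C : X → X → Set X} (hC : IsConvexitySpace C)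
include hC

theorem comm (x y : X) : C x y = C y x :=
  (hC.convex y x x (hC.mem_right y x) y (hC.mem_left y x)).antisymm
    (hC.convex x y y (hC.mem_right x y) x (hC.mem_left x y))

theorem self_eq (x : X) : C x x = {x} :=
  (hC.minimal x x {x} (singleton_subset_iff.2 (hC.mem_left x x)) rfl rfl
    isPreconnected_singleton).symm

theorem union_eq {x y z : X} (hz : z ∈ C x y) : C x z ∪ C z y = C x y :=
  hC.minimal x y _
    (union_subset (hC.convex x y x (hC.mem_left x y) z hz)
      (hC.convex x y z hz y (hC.mem_right x y)))
    (Or.inl (hC.mem_left x z)) (Or.inr (hC.mem_right z y))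
    ((hC.preconnected x z).union z (hC.mem_right x z) (hC.mem_left z y) (hC.preconnected z y))

theorem isPreconnected_diff_singleton_right (x t : X) : IsPreconnected (C x t \ {t}) := by
  rcases eq_or_ne x t with rfl | hxt
  · simp only [hC.self_eq, sdiff_self, isPreconnected_empty]
  intro u v hu hv hcover hne_u hne_v
  by_contra huv
  rw [not_nonempty_iff_eq_empty] at huv
  wlog hxu : x ∈ u generalizing u v
  · have hxv : x ∈ v := (hcover ⟨hC.mem_left x t, hxt⟩).resolve_left hxu
    rw [inter_comm u v] at huv
    exact this v u hv hu (by rwa [union_comm]) hne_v hne_u huv hxv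
  have hglue := (hC.preconnected x t).insert_inter_of_separated (hC.mem_right x t) hu hv hcover huv
  have hglue_eq : insert t (C x t ∩ u) = C x t :=
    hC.minimal x t _ (insert_subset (hC.mem_right x t) inter_subset_left)
      (Or.inr ⟨hC.mem_left x t, hxu⟩) (mem_insert t _) hglue
  obtain ⟨q, ⟨hq, hqt⟩, hqv⟩ := hne_v
  rcases hglue_eq.symm ▸ hq with rfl | ⟨-, hqu⟩
  · exact hqt rfl
  · exact huv.subset ⟨⟨hq, hqt⟩, hqu, hqv⟩

theorem eq_of_mem_of_mem_s1 {x z t : X} (hzt : z ∈ C x t) (htz : t ∈ C x z) : z = t := by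
  by_contra hne
  rcases eq_or_ne x t with rfl | hxt
  · exact hne (by simpa only [hC.self_eq, mem_singleton_iff] using hzt)
  have hsame : C x t = C x z :=
    (hC.convex x z x (hC.mem_left x z) t htz).antisymm
      (hC.convex x t x (hC.mem_left x t) z hzt)
  have hcut : C x t \ {t} = C x z :=
    hC.minimal x z _ (hsame ▸ sdiff_subset) ⟨hC.mem_left x t, hxt⟩ ⟨hzt, hne⟩
      (hC.isPreconnected_diff_singleton_right x t)
  exact (hcut.symm ▸ htz : t ∈ C x t \ {t}).2 rfl

theorem mem_right_of_mem_left {x y z t : X} (hz : z ∈ C x y) (ht : t ∈ C x y) (hzt : z ∈ C x t) :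
    t ∈ C z y := by
  rcases (hC.union_eq hz).symm ▸ ht with htz | htz
  · exact hC.eq_of_mem_of_mem_s1 hzt htz ▸ hC.mem_left z y
  · exact htz

theorem mem_left_iff_mem_right {x y z t : X} (hz : z ∈ C x y) (ht : t ∈ C x y) :
    z ∈ C x t ↔ t ∈ C z y := by
  refine ⟨hC.mem_right_of_mem_left hz ht, fun htz => ?_⟩
  rw [hC.comm] at hz ht htz ⊢
  exact hC.mem_right_of_mem_left ht hz htz

end IsConvexitySpace

end

/-- Proposition 1: Let `X` be a convexity space and `x, y ∈ X`. The relation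
defined for `z, t ∈ C(x,y)` by `z ≤ t` iff `z ∈ C(x,t)` is a linear order on `C(x,y)`
(reflexive, antisymmetric, transitive, total); moreover, for `z, t ∈ C(x,y)` one has
`z ∈ C(x,t)` if and only if `t ∈ C(z,y)`. -/
theorem stmt_1 {X : Type*} [TopologicalSpace X] [T2Space X] {C : X → X → Set X}
    (hC : IsConvexitySpace C) (x y : X) :
    (∀ z ∈ C x y, z ∈ C x z) ∧
    (∀ z ∈ C x y, ∀ t ∈ C x y, z ∈ C x t → t ∈ C x z → z = t) ∧
    (∀ z ∈ C x y, ∀ t ∈ C x y, ∀ s ∈ C x y, z ∈ C x t → t ∈ C x s → z ∈ C x s) ∧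
    (∀ z ∈ C x y, ∀ t ∈ C x y, z ∈ C x t ∨ t ∈ C x z) ∧
    (∀ z ∈ C x y, ∀ t ∈ C x y, (z ∈ C x t ↔ t ∈ C z y)) := by
  refine ⟨fun z _ => hC.mem_right x z, fun z _ t _ => hC.eq_of_mem_of_mem_s1,
    fun z _ t _ s _ hzt hts => hC.convex x s x (hC.mem_left x s) t hts hzt,
    fun z hz t ht => ?_, fun z hz t ht => hC.mem_left_iff_mem_right hz ht⟩
  rcases (hC.union_eq ht).symm ▸ hz with hzt | hzt
  · exact Or.inl hzt
  · exact Or.inr ((hC.mem_left_iff_mem_right ht hz).2 hzt)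
end

section
/- Let X be a convexity space. For all points x, y ∈ X, the subspace C(x,y) of X is compact. -/
/-!
Given an open cover of `C(x,y)`, call two points of `C(x,y)` linked if some connected subset of
`C(x,y)` containing both is covered by finitely many members of the cover. Linkedness is an
equivalence relation, and by (C1) and (C3) a point is linked to all nearby points of `C(x,y)`:
they are joined by `C` inside a convex open set contained in one member of the cover. As `C(x,y)`
is connected, `x` and `y` are linked, and by the minimality (C2) the connected set linking them is
all of `C(x,y)`.
-/

open Filter Topology

theorem IsPreconnected.exists_isPreconnected_subset_finite_cover {X ι : Type*}
    [TopologicalSpace X] {s : Set X} (hs : IsPreconnected s) (U : ι → Set X)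
    (hjoin : ∀ z ∈ s, ∃ i, ∀ᶠ w in 𝓝[s] z,
      ∃ A ⊆ s, IsPreconnected A ∧ z ∈ A ∧ w ∈ A ∧ A ⊆ U i)
    {a b : X} (ha : a ∈ s) (hb : b ∈ s) :
    ∃ A ⊆ s, IsPreconnected A ∧ a ∈ A ∧ b ∈ A ∧ ∃ t : Finset ι, A ⊆ ⋃ i ∈ t, U i := by
  classical
  refine hs.induction₂ (fun a b => ∃ A ⊆ s, IsPreconnected A ∧ a ∈ A ∧ b ∈ A ∧
    ∃ t : Finset ι, A ⊆ ⋃ i ∈ t, U i) (fun z hz => ?_) ?_ ?_ ha hb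
  · obtain ⟨i, hi⟩ := hjoin z hz
    filter_upwards [hi] with w ⟨A, hAs, hA, hzA, hwA, hAU⟩
    exact ⟨A, hAs, hA, hzA, hwA, {i}, by simpa using hAU⟩
  · rintro a b c - - - ⟨A, hAs, hA, haA, hbA, t, hAt⟩ ⟨B, hBs, hB, hbB, hcB, t', hBt⟩
    refine ⟨A ∪ B, Set.union_subset hAs hBs, hA.union b hbA hbB hB, Or.inl haA, Or.inr hcB,
      t ∪ t', ?_⟩
    rw [Finset.set_biUnion_union]
    exact Set.union_subset_union hAt hBt
  · rintro a b - - ⟨A, hAs, hA, haA, hbA, hAt⟩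
    exact ⟨A, hAs, hA, hbA, haA, hAt⟩

namespace IsConvexitySpace

variable {X : Type*} [TopologicalSpace X] [T2Space X] {C : X → X → Set X}

theorem eventually_isPreconnected_join_subset (hC : IsConvexitySpace C) {K : Set X}
    (hK : ConvexWRT C K) {z : X} (hz : z ∈ K) {U : Set X} (hU : IsOpen U) (hzU : z ∈ U) :
    ∀ᶠ w in 𝓝[K] z, ∃ A ⊆ K, IsPreconnected A ∧ z ∈ A ∧ w ∈ A ∧ A ⊆ U := by
  obtain ⟨V, hVo, hzV, hVU, hV⟩ := hC.basis z U hU hzU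
  filter_upwards [mem_nhdsWithin_of_mem_nhds (hVo.mem_nhds hzV), self_mem_nhdsWithin]
    with w hwV hwK
  exact ⟨C z w, hK z hz w hwK, hC.preconnected z w, hC.mem_left z w, hC.mem_right z w,
    (hV z hzV w hwV).trans hVU⟩

end IsConvexitySpace

/-- part of Proposition 2: Let `X` be a convexity space. For all points
`x, y ∈ X`, the subspace `C(x,y)` of `X` is compact. -/
theorem stmt_2 {X : Type*} [TopologicalSpace X] [T2Space X] {C : X → X → Set X}
    (hC : IsConvexitySpace C) (x y : X) :
    IsCompact (C x y) := by
  refine isCompact_of_finite_subcover fun U hUo hcover => ?_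
  have hjoin : ∀ z ∈ C x y, ∃ i, ∀ᶠ w in 𝓝[C x y] z,
      ∃ A ⊆ C x y, IsPreconnected A ∧ z ∈ A ∧ w ∈ A ∧ A ⊆ U i := fun z hz => by
    obtain ⟨i, hi⟩ := Set.mem_iUnion.mp (hcover hz)
    exact ⟨i, hC.eventually_isPreconnected_join_subset (hC.convex x y) hz (hUo i) hi⟩
  obtain ⟨A, hAC, hA, hxA, hyA, t, hAt⟩ :=
    (hC.preconnected x y).exists_isPreconnected_subset_finite_cover U hjoin
      (hC.mem_left x y) (hC.mem_right x y)
  exact ⟨t, hC.minimal x y A hAC hxA hyA hA ▸ hAt⟩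
end

section
/- Every convexity space that is a q-space is star-finite: if X is a convexity space in which every point has a sequence (U_n) of neighborhoods such that every sequence (x_n) with x_n ∈ U_n admits a cluster point, then every closed star in X has a finite end set. -/
/-!
A segment `C x z` is connected and nontrivial, so `x` is an accumulation point of it. In an
infinite star we can therefore pick, on infinitely many distinct segments `C x zₙ`, points
`uₙ ≠ x` inside the q-neighbourhoods `Uₙ` of the center. Each segment contains at most one
`uₙ`, so every set of `uₙ`'s has closed traces on the segments; by the coherence of the star
topology it is closed in the star, hence in `X`. Thus all tails of `(uₙ)` are closed, and an
injective sequence with closed tails has no cluster point, contradicting the q-property.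
-/

open Set Filter Function Topology

theorem not_mapClusterPt_of_injective_of_isClosed_tails {X : Type*} [TopologicalSpace X]
    {u : ℕ → X} (hu : Injective u) (htail : ∀ k, IsClosed (u '' Ici k)) (c : X) :
    ¬ MapClusterPt c atTop u := by
  intro hc
  have hmem : ∀ k, c ∈ u '' Ici k := fun k =>
    (htail k).closure_eq ▸ mapClusterPt_atTop_iff_forall_mem_closure.mp hc k
  obtain ⟨n, -, rfl⟩ := hmem 0
  obtain ⟨m, hm, hmn⟩ := hmem (n + 1)
  exact absurd (hu hmn) (by simp only [mem_Ici] at hm; omega)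

section Star

variable {X ι : Type*} {A : ι → Set X} {E : Set ι} {x : X}

theorem isClosed_of_subsingleton_inter [TopologicalSpace X] [T1Space X]
    (hfinest : ∀ Z : Set X, Z ⊆ (⋃ i ∈ E, A i) →
      (∀ i ∈ E, ∃ F : Set X, IsClosed F ∧ Z ∩ A i = F ∩ A i) →
      ∃ F : Set X, IsClosed F ∧ Z = F ∩ (⋃ i ∈ E, A i))
    (hclosed : IsClosed (⋃ i ∈ E, A i)) {Z : Set X} (hZ : Z ⊆ ⋃ i ∈ E, A i)
    (hsub : ∀ i ∈ E, (Z ∩ A i).Subsingleton) : IsClosed Z := by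
  obtain ⟨F, hF, rfl⟩ := hfinest Z hZ fun i hi =>
    ⟨Z ∩ A i, (hsub i hi).isClosed, by rw [inter_assoc, inter_self]⟩
  exact hF.inter hclosed

theorem eq_of_mem_inter_of_ne_center (hdisj : ∀ i ∈ E, ∀ j ∈ E, i ≠ j → A i ∩ A j = {x})
    {i j : ι} (hi : i ∈ E) (hj : j ∈ E) {v : X}
    (hvi : v ∈ A i) (hvj : v ∈ A j) (hvx : v ≠ x) : i = j := by
  by_contra hij
  exact hvx (hdisj i hi j hj hij ▸ ⟨hvi, hvj⟩ : v ∈ ({x} : Set X))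

variable {z : ℕ → ι} {u : ℕ → X}

theorem subsingleton_image_inter_of_mem_segments
    (hdisj : ∀ i ∈ E, ∀ j ∈ E, i ≠ j → A i ∩ A j = {x})
    (hz : Injective z) (hzE : ∀ n, z n ∈ E) (hu : ∀ n, u n ∈ A (z n)) (hux : ∀ n, u n ≠ x)
    (T : Set ℕ) {i : ι} (hi : i ∈ E) :
    (u '' T ∩ A i).Subsingleton := by
  have hzi : ∀ n, u n ∈ A i → z n = i := fun n hn =>
    eq_of_mem_inter_of_ne_center hdisj (hzE n) hi (hu n) hn (hux n)
  rintro _ ⟨⟨m, -, rfl⟩, hm⟩ _ ⟨⟨n, -, rfl⟩, hn⟩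
  rw [hz ((hzi m hm).trans (hzi n hn).symm)]

theorem injective_of_mem_segments
    (hdisj : ∀ i ∈ E, ∀ j ∈ E, i ≠ j → A i ∩ A j = {x})
    (hz : Injective z) (hzE : ∀ n, z n ∈ E) (hu : ∀ n, u n ∈ A (z n)) (hux : ∀ n, u n ≠ x) :
    Injective u := fun m n hmn =>
  hz <| eq_of_mem_inter_of_ne_center hdisj (hzE m) (hzE n) (hu m) (hmn ▸ hu n) (hux m)

end Star

/-- Proposition 4: Every convexity space that is a q-space is star-finite.
Here a q-space is a space in which every point `p` has a sequence `(U n)` of neighbourhoods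
such that every sequence `(u n)` with `u n ∈ U n` has a cluster point.  A star with center
`x` and end set `E ⊆ X \ {x}` is the union `S = ⋃ z ∈ E, C x z`, where the segments
`C x z`, `z ∈ E`, pairwise intersect exactly in `{x}`, and where the subspace topology of
`S` is the finest topology making all inclusions `C x z ↪ S` continuous (i.e. every
`Z ⊆ S` whose trace on each `C x z` is closed in `C x z` is closed in `S`).  If such a
star is closed in `X`, then its end set `E` is finite. -/
theorem stmt_5 {X : Type*} [TopologicalSpace X] [T2Space X] {C : X → X → Set X}
    (hC : IsConvexitySpace C)
    (hq : ∀ p : X, ∃ U : ℕ → Set X, (∀ n, U n ∈ nhds p) ∧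
      ∀ u : ℕ → X, (∀ n, u n ∈ U n) → ∃ c : X, MapClusterPt c Filter.atTop u)
    (x : X) (E : Set X) (hxE : x ∉ E)
    (hdisj : ∀ z ∈ E, ∀ z' ∈ E, z ≠ z' → C x z ∩ C x z' = {x})
    (hfinest : ∀ Z : Set X, Z ⊆ (⋃ z ∈ E, C x z) →
      (∀ z ∈ E, ∃ F : Set X, IsClosed F ∧ Z ∩ C x z = F ∩ C x z) →
      ∃ F : Set X, IsClosed F ∧ Z = F ∩ (⋃ z ∈ E, C x z))
    (hclosed : IsClosed (⋃ z ∈ E, C x z)) :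
    E.Finite := by
  by_contra hinf
  obtain ⟨U, hU, hcluster⟩ := hq x
  let z : ℕ → X := fun n => Set.Infinite.natEmbedding E hinf n
  have hzE : ∀ n, z n ∈ E := fun n => (Set.Infinite.natEmbedding E hinf n).2
  have hz : Injective z := Subtype.val_injective.comp (Set.Infinite.natEmbedding E hinf).injective
  have hacc : ∀ n, AccPt x (𝓟 (C x (z n))) := fun n =>
    (hC.preconnected x (z n)).preperfect_of_nontrivial
      ⟨x, hC.mem_left x (z n), z n, hC.mem_right x (z n), fun h => hxE (h ▸ hzE n)⟩
      x (hC.mem_left x (z n))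
  choose u hu hux using fun n => accPt_iff_nhds.mp (hacc n) (U n) (hU n)
  have huC : ∀ n, u n ∈ C x (z n) := fun n => (hu n).2
  obtain ⟨c, hc⟩ := hcluster u fun n => (hu n).1
  refine not_mapClusterPt_of_injective_of_isClosed_tails
    (injective_of_mem_segments hdisj hz hzE huC hux) (fun k => ?_) c hc
  refine isClosed_of_subsingleton_inter hfinest hclosed ?_ fun i hi =>
    subsingleton_image_inter_of_mem_segments hdisj hz hzE huC hux _ hi
  rintro _ ⟨n, -, rfl⟩
  exact mem_biUnion (hzE n) (huC n)
end

section
/- Let X be a Hausdorff real topological vector space, and for x, y ∈ X let C(x,y) be the closed line segment {λx + (1−λ)y : 0 ≤ λ ≤ 1}. Then X together with this map C is a convexity space if and only if X is a locally convex topological vector space (i.e., the origin has a neighborhood basis of convex sets). -/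
open Set Filter Topology

theorem convexWRT_segment_iff {𝕜 E : Type*} [Semiring 𝕜] [PartialOrder 𝕜] [AddCommMonoid E]
    [Module 𝕜 E] {s : Set E} : ConvexWRT (segment 𝕜) s ↔ Convex 𝕜 s :=
  convex_iff_segment_subset.symm

theorem LocallyConvexSpace.exists_isOpen_convex_subset {E : Type*} [AddCommGroup E]
    [Module ℝ E] [TopologicalSpace E] [IsTopologicalAddGroup E] [ContinuousConstSMul ℝ E]
    [LocallyConvexSpace ℝ E] {x : E} {W : Set E} (hW : W ∈ 𝓝 x) :
    ∃ V, IsOpen V ∧ x ∈ V ∧ V ⊆ W ∧ Convex ℝ V := by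
  obtain ⟨S, ⟨hS, hSc⟩, hSW⟩ := (LocallyConvexSpace.convex_basis (𝕜 := ℝ) x).mem_iff.1 hW
  exact ⟨interior S, isOpen_interior, mem_interior_iff_mem_nhds.2 hS,
    interior_subset.trans hSW, hSc.interior⟩

section Segment

variable {E : Type*} [AddCommGroup E] [Module ℝ E] [TopologicalSpace E]
  [IsTopologicalAddGroup E] [ContinuousSMul ℝ E]

theorem isEmbedding_lineMap [T2Space E] {x y : E} (hxy : x ≠ y) :
    IsEmbedding (AffineMap.lineMap x y : ℝ → E) :=
  (Homeomorph.addRight x).isEmbedding.comp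
    (isClosedEmbedding_smul_left (sub_ne_zero.2 hxy.symm)).isEmbedding

theorem eq_segment_of_isPreconnected [T2Space E] {x y : E} {A : Set E}
    (hA : A ⊆ segment ℝ x y) (hx : x ∈ A) (hy : y ∈ A) (hAc : IsPreconnected A) :
    A = segment ℝ x y := by
  refine hA.antisymm ?_
  rcases eq_or_ne x y with rfl | hxy
  · simpa using hx
  rw [segment_eq_image_lineMap] at hA ⊢
  have hpre : IsPreconnected (AffineMap.lineMap x y ⁻¹' A : Set ℝ) := by
    rwa [← (isEmbedding_lineMap hxy).isInducing.isPreconnected_image,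
      image_preimage_eq_of_subset (hA.trans (image_subset_range _ _))]
  exact image_subset_iff.2 (hpre.Icc_subset (by simpa using hx) (by simpa using hy))

theorem eventually_segment_subset {x y : E} {W : Set E} (hW : IsOpen W)
    (h : segment ℝ x y ⊆ W) : ∀ᶠ p in 𝓝 (x, y), segment ℝ p.1 p.2 ⊆ W := by
  rw [segment_eq_image] at h
  filter_upwards [isCompact_Icc.eventually_forall_of_forall_eventually
    (P := fun (p : E × E) (t : ℝ) => (1 - t) • p.1 + t • p.2 ∈ W) fun t ht =>
      (Continuous.continuousAt (by fun_prop)).preimage_mem_nhds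
        (hW.mem_nhds (h (mem_image_of_mem _ ht)))] with p hp
  rw [segment_eq_image]
  rintro _ ⟨t, ht, rfl⟩
  exact hp t ht

theorem isConvexitySpace_segment [T2Space E] [LocallyConvexSpace ℝ E] :
    IsConvexitySpace (fun x y : E => segment ℝ x y) where
  mem_left := left_mem_segment ℝ
  mem_right := right_mem_segment ℝ
  preconnected x y := (convex_segment x y).isPreconnected
  convex x y := convexWRT_segment_iff.2 (convex_segment x y)
  minimal _ _ _ := eq_segment_of_isPreconnected
  continuity x y W hW h := by
    obtain ⟨V, V', hV, hxV, hV', hyV', hVV'⟩ :=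
      mem_nhds_prod_iff'.1 (eventually_segment_subset hW h)
    exact ⟨V, V', hV, hV', hxV, hyV', fun x' hx' y' hy' => hVV' (mk_mem_prod hx' hy')⟩
  basis x W hW hxW := by
    obtain ⟨V, hV, hxV, hVW, hVc⟩ :=
      LocallyConvexSpace.exists_isOpen_convex_subset (hW.mem_nhds hxW)
    exact ⟨V, hV, hxV, hVW, convexWRT_segment_iff.2 hVc⟩

end Segment

theorem IsConvexitySpace.locallyConvexSpace_of_segment {E : Type*} [AddCommGroup E]
    [Module ℝ E] [TopologicalSpace E] [T2Space E]
    (h : IsConvexitySpace (fun x y : E => segment ℝ x y)) : LocallyConvexSpace ℝ E := by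
  refine (locallyConvexSpace_iff_exists_convex_subset ℝ E).2 fun x U hU => ?_
  obtain ⟨W, hWU, hW, hxW⟩ := mem_nhds_iff.1 hU
  obtain ⟨V, hV, hxV, hVW, hVc⟩ := h.basis x W hW hxW
  exact ⟨V, hV.mem_nhds hxV, convexWRT_segment_iff.1 hVc, hVW.trans hWU⟩

/-- Example 4, first part: Let `X` be a Hausdorff real topological vector
space, and for `x, y ∈ X` let `C(x,y)` be the closed line segment
`{λ • x + (1-λ) • y : 0 ≤ λ ≤ 1}` (Mathlib's `segment ℝ x y`).  Then `X` together with
this map `C` is a convexity space if and only if `X` is a locally convex topological vector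
space, i.e. the origin has a neighbourhood basis of convex sets. -/
theorem stmt_6 {X : Type*} [AddCommGroup X] [Module ℝ X] [TopologicalSpace X] [T2Space X]
    [IsTopologicalAddGroup X] [ContinuousSMul ℝ X] :
    IsConvexitySpace (fun x y : X => segment ℝ x y) ↔
      ∀ S ∈ nhds (0 : X), ∃ T ∈ nhds (0 : X), Convex ℝ T ∧ T ⊆ S := by
  rw [← locallyConvexSpace_iff_exists_convex_subset_zero]
  exact ⟨IsConvexitySpace.locallyConvexSpace_of_segment, fun _ => isConvexitySpace_segment⟩
end

section
/- Let f : X → Y be a continuous map between topological spaces that is locally open onto its image. Then the quotient map q^f : X → X^f is open; equivalently, for every open set U ⊆ X, the saturation {x ∈ X : ∃ y ∈ U with f(x) = f(y) and f(𝓝(x)) = f(𝓝(y))} is open in X. -/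
/-- A continuous map `f : X → Y` is *locally open onto its image* if every `x ∈ X` has an
open neighbourhood `U` such that the induced map `U → f(U)` is open, where `f(U)` carries
the subspace topology from `Y` (equivalently: the image of every open `W ⊆ U` is
relatively open in `f(U)`). -/
def IsLocallyOpenOntoImage {X Y : Type*} [TopologicalSpace X] [TopologicalSpace Y]
    (f : X → Y) : Prop :=
  ∀ x : X, ∃ U : Set X, IsOpen U ∧ x ∈ U ∧
    ∀ W : Set X, W ⊆ U → IsOpen W → ∃ O : Set Y, IsOpen O ∧ f '' W = O ∩ f '' U

/-- The equivalence relation on `X` identifying `x` and `x'` iff `f x = f x'` and the image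
filters `f(𝓝 x)` and `f(𝓝 x')` coincide. -/
def nhdsSetoid {X Y : Type*} [TopologicalSpace X] (f : X → Y) : Setoid X where
  r a b := f a = f b ∧ Filter.map f (nhds a) = Filter.map f (nhds b)
  iseqv := ⟨fun _ => ⟨rfl, rfl⟩, fun h => ⟨h.1.symm, h.2.symm⟩,
    fun h h' => ⟨h.1.trans h'.1, h.2.trans h'.2⟩⟩

/-- The space `X^f`: the quotient of `X` by the relation `x ~ x'` iff `f x = f x'` and
`f(𝓝 x) = f(𝓝 x')`, endowed with the quotient topology. -/
abbrev SpaceXf {X Y : Type*} [TopologicalSpace X] (f : X → Y) : Type _ :=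
  Quotient (nhdsSetoid f)

/-- The canonical quotient map `q^f : X → X^f`. -/
def qMap {X Y : Type*} [TopologicalSpace X] (f : X → Y) : X → SpaceXf f :=
  Quotient.mk (nhdsSetoid f)

/-- The induced map `f# : X^f → Y` with `f = f# ∘ q^f`. -/
def fSharp {X Y : Type*} [TopologicalSpace X] (f : X → Y) : SpaceXf f → Y :=
  Quotient.lift f fun _ _ h => h.1

/-!
On an open set `U` on which `f` is open onto its image, the image filter is a germ of a set:
`f(𝓝 x) = 𝓝[f '' U] (f x)`. So if `x ~ y` with `y` in an open set `U`, the images of such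
neighbourhoods `V` of `x` and `W ⊆ U` of `y` have the same germ at `f x`, i.e. they coincide
near `f x`, hence also near `f x'` for every `x'` close to `x`. Such an `x'` then has
the same germ as some point of `W`, which is the openness of the saturation of `U`.
-/

open Filter Topology Set

section

variable {X Y : Type*} [TopologicalSpace X]

theorem qMap_preimage_image (f : X → Y) (U : Set X) :
    qMap f ⁻¹' (qMap f '' U) = {x : X | ∃ y ∈ U, f x = f y ∧ map f (𝓝 x) = map f (𝓝 y)} := by
  ext x
  constructor
  · rintro ⟨y, hy, hyx⟩
    obtain ⟨hf, hnhds⟩ := Quotient.exact hyx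
    exact ⟨y, hy, hf.symm, hnhds.symm⟩
  · rintro ⟨y, hy, hf, hnhds⟩
    exact ⟨y, hy, Quotient.sound ⟨hf.symm, hnhds.symm⟩⟩

theorem isQuotientMap_qMap (f : X → Y) : IsQuotientMap (qMap f) :=
  isQuotientMap_quotient_mk'

variable [TopologicalSpace Y] {f : X → Y}

def IsOpenOntoImageOn (f : X → Y) (U : Set X) : Prop :=
  ∀ W ⊆ U, IsOpen W → ∃ O : Set Y, IsOpen O ∧ f '' W = O ∩ f '' U

theorem IsOpenOntoImageOn.mono {U V : Set X} (hU : IsOpenOntoImageOn f U) (hVU : V ⊆ U) :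
    IsOpenOntoImageOn f V := by
  intro W hWV hW
  obtain ⟨O, hO, hWO⟩ := hU W (hWV.trans hVU) hW
  refine ⟨O, hO, subset_antisymm (subset_inter ?_ (image_mono hWV)) ?_⟩
  · exact hWO ▸ inter_subset_left
  · exact hWO ▸ inter_subset_inter_right O (image_mono hVU)

theorem IsOpenOntoImageOn.map_nhds_eq {U : Set X} (hfU : IsOpenOntoImageOn f U)
    (hU : IsOpen U) {x : X} (hx : x ∈ U) (hf : ContinuousAt f x) :
    map f (𝓝 x) = 𝓝[f '' U] (f x) := by
  refine le_antisymm ?_ (le_map fun s hs => ?_)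
  · rw [← hU.nhdsWithin_eq hx]
    exact (hf.continuousWithinAt (s := U)).tendsto_nhdsWithin_image
  · obtain ⟨W, hWs, hWo, hxW⟩ := mem_nhds_iff.1 (inter_mem hs (hU.mem_nhds hx))
    obtain ⟨O, hO, hWO⟩ := hfU W (hWs.trans inter_subset_right) hWo
    have hfxO : f x ∈ O := (hWO ▸ mem_image_of_mem f hxW : f x ∈ O ∩ f '' U).1
    refine mem_of_superset (inter_mem_nhdsWithin _ (hO.mem_nhds hfxO)) ?_
    rw [inter_comm, ← hWO]
    exact image_mono (hWs.trans inter_subset_left)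

theorem isLocallyOpenOntoImage_iff :
    IsLocallyOpenOntoImage f ↔ ∀ x, ∃ U, IsOpen U ∧ x ∈ U ∧ IsOpenOntoImageOn f U :=
  Iff.rfl

theorem IsLocallyOpenOntoImage.isOpen_saturation (hf : Continuous f)
    (h : IsLocallyOpenOntoImage f) {U : Set X} (hU : IsOpen U) :
    IsOpen {x : X | ∃ y ∈ U, f x = f y ∧ map f (𝓝 x) = map f (𝓝 y)} := by
  refine isOpen_iff_mem_nhds.2 ?_
  rintro x ⟨y, hyU, hfxy, hxy⟩
  obtain ⟨V, hVo, hxV, hV⟩ := isLocallyOpenOntoImage_iff.1 h x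
  obtain ⟨W, hWo, hyW, hW⟩ := isLocallyOpenOntoImage_iff.1 h y
  have hWU : IsOpenOntoImageOn f (W ∩ U) := hW.mono inter_subset_left
  have hVW : f '' V =ᶠ[𝓝 (f x)] f '' (W ∩ U) := by
    rw [← nhdsWithin_eq_iff_eventuallyEq, ← hV.map_nhds_eq hVo hxV hf.continuousAt, hxy, hfxy,
      hWU.map_nhds_eq (hWo.inter hU) ⟨hyW, hyU⟩ hf.continuousAt]
  filter_upwards [hVo.mem_nhds hxV, hf.continuousAt hVW.eventuallyEq_nhds] with x' hx'V hx'
  obtain ⟨y', hy', hfy'⟩ : f x' ∈ f '' (W ∩ U) :=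
    hx'.eq_of_nhds.mp (mem_image_of_mem f hx'V)
  refine ⟨y', hy'.2, hfy'.symm, ?_⟩
  rw [hV.map_nhds_eq hVo hx'V hf.continuousAt, nhdsWithin_eq_iff_eventuallyEq.2 hx', ← hfy',
    hWU.map_nhds_eq (hWo.inter hU) hy' hf.continuousAt]

end

/-- part of Proposition 5: Let `f : X → Y` be a continuous map between
topological spaces that is locally open onto its image.  Then the quotient map
`q^f : X → X^f` is open; equivalently, for every open set `U ⊆ X` the saturation
`{x ∈ X : ∃ y ∈ U, f x = f y ∧ f(𝓝 x) = f(𝓝 y)}` is open in `X`. -/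
theorem stmt_7 {X Y : Type*} [TopologicalSpace X] [TopologicalSpace Y]
    (f : X → Y) (hf : Continuous f) (h : IsLocallyOpenOntoImage f) :
    IsOpenMap (qMap f) ∧
    ∀ U : Set X, IsOpen U →
      IsOpen {x : X | ∃ y ∈ U, f x = f y ∧ Filter.map f (nhds x) = Filter.map f (nhds y)} := by
  refine ⟨fun U hU => ?_, fun U hU => h.isOpen_saturation hf hU⟩
  rw [← (isQuotientMap_qMap f).isOpen_preimage, qMap_preimage_image]
  exact h.isOpen_saturation hf hU
end

section
/- Let f : X → Y be a filtered continuous map between topological spaces. Then every point x ∈ X has an open neighborhood U such that the restriction of f to U is a homeomorphism of U onto the subspace f(U) of Y. -/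
open Filter Set Topology

/-! On a neighbourhood `U` on which `f` is open onto its image, the image filter `f(𝓝 a)` is
the neighbourhood filter of `f a` in the subspace `f(U)`. Hence the injectivity of
`x ↦ (f x, f(𝓝 x))` makes `f` injective on `U`, and an injective map `g` with
`g(𝓝 z) = 𝓝[range g] (g z)` for all `z` is an embedding. -/

theorem Topology.isEmbedding_of_injective_of_map_nhds {Z Y : Type*} [TopologicalSpace Z]
    [TopologicalSpace Y] {g : Z → Y} (hinj : Function.Injective g)
    (hmap : ∀ z, map g (𝓝 z) = 𝓝[range g] (g z)) : IsEmbedding g := by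
  refine ⟨isInducing_iff_nhds.2 fun z => ?_, hinj⟩
  calc 𝓝 z = comap g (map g (𝓝 z)) := (comap_map hinj).symm
    _ = comap g (𝓝 (g z) ⊓ 𝓟 (range g)) := congrArg (comap g) (hmap z)
    _ = comap g (𝓝 (g z)) := comap_inf_principal_range

section OpenOntoImage

variable {X Y : Type*} [TopologicalSpace X] [TopologicalSpace Y] {f : X → Y} {U : Set X}

theorem map_nhds_eq_nhdsWithin_image (hf : Continuous f) (hU : IsOpen U)
    (hopen : ∀ W ⊆ U, IsOpen W → ∃ O : Set Y, IsOpen O ∧ f '' W = O ∩ f '' U)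
    {a : X} (ha : a ∈ U) : map f (𝓝 a) = 𝓝[f '' U] (f a) := by
  refine le_antisymm (le_inf hf.continuousAt (le_principal_iff.2 <|
    image_mem_map (hU.mem_nhds ha))) fun s hs => ?_
  obtain ⟨W, hWs, hWo, haW⟩ := mem_nhds_iff.1 (mem_map.1 hs)
  obtain ⟨O, hOo, hO⟩ := hopen (W ∩ U) inter_subset_right (hWo.inter hU)
  have hfaO : f a ∈ O := (hO ▸ mem_image_of_mem f ⟨haW, ha⟩ : f a ∈ O ∩ f '' U).1
  refine mem_of_superset (inter_mem_nhdsWithin _ (hOo.mem_nhds hfaO)) ?_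
  rw [inter_comm, ← hO]
  rintro _ ⟨x, ⟨hxW, -⟩, rfl⟩
  exact hWs hxW

theorem isEmbedding_domRestrict_of_map_nhds (hU : IsOpen U) (hinj : InjOn f U)
    (hmap : ∀ a ∈ U, map f (𝓝 a) = 𝓝[f '' U] (f a)) : IsEmbedding (U.domRestrict f) := by
  refine isEmbedding_of_injective_of_map_nhds hinj.injective fun u => ?_
  rw [range_domRestrict, domRestrict_eq, ← map_map, map_nhds_subtype_val, hU.nhdsWithin_eq u.2]
  exact hmap u u.2

end OpenOntoImage

/-- last part of Proposition 5: Let `f : X → Y` be a filtered continuous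
map between topological spaces, i.e. `f` is locally open onto its image and
`x ↦ (f x, f(𝓝 x))` is injective.  Then every point `x ∈ X` has an open neighbourhood `U`
such that the restriction of `f` to `U` is a homeomorphism of `U` onto the subspace
`f(U)` of `Y` (i.e. `f` restricted to `U` is a topological embedding into `Y`). -/
theorem stmt_9 {X Y : Type*} [TopologicalSpace X] [TopologicalSpace Y]
    (f : X → Y) (hf : Continuous f) (h₁ : IsLocallyOpenOntoImage f)
    (h₂ : Function.Injective (fun x : X => (f x, Filter.map f (nhds x)))) :
    ∀ x : X, ∃ U : Set X, IsOpen U ∧ x ∈ U ∧ Topology.IsEmbedding (U.restrict f) := by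
  intro x
  obtain ⟨U, hU, hxU, hopen⟩ := h₁ x
  have hmap : ∀ a ∈ U, map f (𝓝 a) = 𝓝[f '' U] (f a) := fun a ha =>
    map_nhds_eq_nhdsWithin_image hf hU hopen ha
  have hinj : InjOn f U := fun a ha b hb hab =>
    h₂ (Prod.ext hab (by dsimp only; rw [hmap a ha, hmap b hb, hab]))
  exact ⟨U, hU, hxU, isEmbedding_domRestrict_of_map_nhds hU hinj hmap⟩
end

section
/- Let Y be a topological space equipped with a local convexity structure. Then the closure of any convex subset of Y is convex. -/
universe u v w

/-- A convexity-space structure on an (open) subset `U` of a topological space `Y`,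
given by a map `C` assigning to points `x, y ∈ U` a subset `C x y ⊆ U`:
`U` with its subspace topology is Hausdorff, `C` is continuous (as a map into the
power set of `U` with the topology generated by `{A | A ⊆ W}`, `W` relatively open),
(C1) each `C x y` is convex, (C2) each `C x y` is minimal among the connected subsets of
`U` containing `x` and `y`, and (C3) `U` has a basis of convex (relatively) open sets.
Since `U` is required to be open in `Y`, relatively open subsets of `U` are exactly the
open subsets of `Y` contained in `U`. -/
structure IsConvexitySpaceOn {Y : Type*} [TopologicalSpace Y] (U : Set Y)
    (C : Y → Y → Set Y) : Prop where
  /-- The carrier is open in the ambient space. -/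
  isOpen : IsOpen U
  /-- `U` is Hausdorff in its subspace topology. -/
  t2 : ∀ x ∈ U, ∀ y ∈ U, x ≠ y →
    ∃ V W : Set Y, IsOpen V ∧ IsOpen W ∧ x ∈ V ∧ y ∈ W ∧ V ∩ W ∩ U = ∅
  /-- `C x y` is a subset of `U` for `x, y ∈ U`. -/
  segment_subset : ∀ x ∈ U, ∀ y ∈ U, C x y ⊆ U
  /-- `C x y` contains `x`. -/
  mem_left : ∀ x ∈ U, ∀ y ∈ U, x ∈ C x y
  /-- `C x y` contains `y`. -/
  mem_right : ∀ x ∈ U, ∀ y ∈ U, y ∈ C x y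
  /-- `C x y` is connected. -/
  preconnected : ∀ x ∈ U, ∀ y ∈ U, IsPreconnected (C x y)
  /-- (C1): `C x y` is convex. -/
  convex : ∀ x ∈ U, ∀ y ∈ U, ∀ u ∈ C x y, ∀ v ∈ C x y, C u v ⊆ C x y
  /-- (C2): `C x y` is minimal among the connected subsets of `U` containing `x, y`. -/
  minimal : ∀ x ∈ U, ∀ y ∈ U, ∀ A : Set Y, A ⊆ C x y → x ∈ A → y ∈ A →
    IsPreconnected A → A = C x y
  /-- Continuity of `(x, y) ↦ C x y`. -/
  continuity : ∀ x ∈ U, ∀ y ∈ U, ∀ W : Set Y, IsOpen W → C x y ⊆ W →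
    ∃ V V' : Set Y, IsOpen V ∧ IsOpen V' ∧ x ∈ V ∧ y ∈ V' ∧
      ∀ x' ∈ V ∩ U, ∀ y' ∈ V' ∩ U, C x' y' ⊆ W
  /-- (C3): `U` has a basis of convex open sets. -/
  basis : ∀ x ∈ U, ∀ W : Set Y, IsOpen W → x ∈ W →
    ∃ V : Set Y, IsOpen V ∧ x ∈ V ∧ V ⊆ W ∩ U ∧ ∀ u ∈ V, ∀ v ∈ V, C u v ⊆ V

/-- A *local convexity structure* on a topological space `Y`: an open cover `atlas` of `Y`
by convexity spaces (chart `U` carrying the convexity map `seg U`) such that every convex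
open subspace of a chart is again a chart, with the restricted convexity map. -/
structure LocalConvexityStructure (Y : Type*) [TopologicalSpace Y] where
  /-- The charts. -/
  atlas : Set (Set Y)
  /-- The convexity map of each chart: `seg U x y` is the minimal connected subset of the
  chart `U` joining `x` and `y`. -/
  seg : Set Y → Y → Y → Set Y
  /-- The charts cover `Y`. -/
  covers : ∀ y : Y, ∃ U ∈ atlas, y ∈ U
  /-- Each chart is a convexity space. -/
  convexity : ∀ U ∈ atlas, IsConvexitySpaceOn U (seg U)
  /-- Every convex open subspace of a chart is a chart, with the restricted map. -/
  subchart : ∀ U ∈ atlas, ∀ V : Set Y, V ⊆ U → IsOpen V →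
    (∀ u ∈ V, ∀ v ∈ V, seg U u v ⊆ V) →
    V ∈ atlas ∧ ∀ u ∈ V, ∀ v ∈ V, seg V u v = seg U u v

/-- A subset `A ⊆ Y` is convex (w.r.t. a local convexity structure) if `A ∩ U` is convex
in `U` for every chart `U`. -/
def LocalConvexityStructure.IsConvexSet {Y : Type*} [TopologicalSpace Y]
    (𝒱 : LocalConvexityStructure Y) (A : Set Y) : Prop :=
  ∀ U ∈ 𝒱.atlas, ∀ u ∈ A ∩ U, ∀ v ∈ A ∩ U, 𝒱.seg U u v ⊆ A ∩ U

/-- The convex hull of `A ⊆ Y`: the smallest convex set containing `A`. -/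
def LocalConvexityStructure.hull {Y : Type*} [TopologicalSpace Y]
    (𝒱 : LocalConvexityStructure Y) (A : Set Y) : Set Y :=
  ⋂₀ {B : Set Y | A ⊆ B ∧ 𝒱.IsConvexSet B}

/-- `U` is a member of `𝒱_e` with target chart `V`: `U` is an open subset of `Z` mapped by
`e` homeomorphically (injectively and relatively openly; `e` is continuous in context)
onto a convex subspace of the chart `V` of `Y`. -/
def IsEtaleChartTo {Z Y : Type*} [TopologicalSpace Z] [TopologicalSpace Y]
    (𝒱 : LocalConvexityStructure Y) (e : Z → Y) (U : Set Z) (V : Set Y) : Prop :=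
  IsOpen U ∧ Set.InjOn e U ∧
  (∀ W : Set Z, W ⊆ U → IsOpen W → ∃ O : Set Y, IsOpen O ∧ e '' W = O ∩ e '' U) ∧
  V ∈ 𝒱.atlas ∧ e '' U ⊆ V ∧
  ∀ p ∈ e '' U, ∀ q ∈ e '' U, 𝒱.seg V p q ⊆ e '' U

/-- `U ∈ 𝒱_e`: `U` is an open subset of `Z` mapped by `e` homeomorphically onto a convex
subspace of some chart of `Y`. -/
def IsEtaleChart {Z Y : Type*} [TopologicalSpace Z] [TopologicalSpace Y]
    (𝒱 : LocalConvexityStructure Y) (e : Z → Y) (U : Set Z) : Prop :=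
  ∃ V : Set Y, IsEtaleChartTo 𝒱 e U V

/-- A continuous map `e : Z → Y` from a connected space `Z` is *étale* (w.r.t. a local
convexity structure on `Y`) if `e` is closed and the charts `𝒱_e` cover `Z`. -/
structure IsEtale {Z Y : Type*} [TopologicalSpace Z] [TopologicalSpace Y]
    (𝒱 : LocalConvexityStructure Y) (e : Z → Y) : Prop where
  continuous : Continuous e
  connectedSpace : ConnectedSpace Z
  isClosedMap : IsClosedMap e
  charts_cover : ∀ z : Z, ∃ U : Set Z, IsEtaleChart 𝒱 e U ∧ z ∈ U

/-- `e : Z → Y` is *generated* by `F ⊆ Z` if there is no proper closed connected subset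
`A ⊊ Z` containing `F` such that `e(U ∩ A)` is convex for all `U ∈ 𝒱_e`. -/
def Generates {Z Y : Type*} [TopologicalSpace Z] [TopologicalSpace Y]
    (𝒱 : LocalConvexityStructure Y) (e : Z → Y) (F : Set Z) : Prop :=
  ¬ ∃ A : Set Z, A ≠ Set.univ ∧ IsClosed A ∧ IsPreconnected A ∧ F ⊆ A ∧
      ∀ U : Set Z, IsEtaleChart 𝒱 e U → 𝒱.IsConvexSet (e '' (U ∩ A))

/-- A *geodesic manifold*: a Hausdorff space `Y` with a local convexity structure such that
(G1) the closure of the convex hull of every finite set is compact, and (G2) for every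
étale map `e : Z → Y` with `Z` compact that is generated by a two-element set
`{x, y} ⊆ Z`, every connected subset of `Z` containing `x` and `y` is all of `Z`. -/
structure IsGeodesicManifold {Y : Type v} [TopologicalSpace Y]
    (𝒱 : LocalConvexityStructure Y) : Prop where
  t2 : T2Space Y
  /-- (G1). -/
  hull_compact : ∀ F : Set Y, F.Finite → IsCompact (closure (𝒱.hull F))
  /-- (G2). -/
  geodesic_minimal : ∀ (Z : Type v) [TopologicalSpace Z] (e : Z → Y),
    CompactSpace Z → IsEtale 𝒱 e → ∀ x y : Z, Generates 𝒱 e {x, y} →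
    ∀ A : Set Z, IsPreconnected A → x ∈ A → y ∈ A → A = Set.univ

/-- Star-finiteness of the convexity space `(U, C)` (relative to the ambient space `Y`,
`U` being open in `Y`): every closed star in `U` has a finite end set.  A star with center
`x ∈ U` and end set `E ⊆ U \ {x}` is the union `S = ⋃ z ∈ E, C x z` where the segments
`C x z` pairwise intersect exactly in `{x}` and the subspace topology of `S` is the finest
topology making all inclusions `C x z ↪ S` continuous (i.e. every `Z ⊆ S` whose trace on
each `C x z` is closed in `C x z` is closed in `S`); the star is closed if `S` is closed
in `U`. -/
def StarFiniteOn {Y : Type*} [TopologicalSpace Y] (U : Set Y) (C : Y → Y → Set Y) : Prop :=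
  ∀ x ∈ U, ∀ E : Set Y, E ⊆ U \ {x} →
    (∀ z ∈ E, ∀ z' ∈ E, z ≠ z' → C x z ∩ C x z' = {x}) →
    (∀ Z : Set Y, Z ⊆ (⋃ z ∈ E, C x z) →
      (∀ z ∈ E, ∃ F : Set Y, IsClosed F ∧ Z ∩ C x z = F ∩ C x z) →
      ∃ F : Set Y, IsClosed F ∧ Z = F ∩ (⋃ z ∈ E, C x z)) →
    (∃ F : Set Y, IsClosed F ∧ (⋃ z ∈ E, C x z) = F ∩ U) →
    E.Finite

/-- A *geodesic q-manifold*: a geodesic manifold all of whose charts are star-finite and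
regular (as subspaces). -/
structure IsGeodesicQManifold {Y : Type v} [TopologicalSpace Y]
    (𝒱 : LocalConvexityStructure Y) extends IsGeodesicManifold 𝒱 : Prop where
  starFinite : ∀ U ∈ 𝒱.atlas, StarFiniteOn U (𝒱.seg U)
  regular : ∀ U ∈ 𝒱.atlas, RegularSpace U

/-- A *geodesic* in `Y` joining `p` and `q`: an étale map `e : Z → Y` with `Z` compact,
generated by a two-element set `{x, y} ⊆ Z`, whose end points are `e x = p` and
`e y = q`. -/
structure GeodesicConnecting {Y : Type v} [TopologicalSpace Y]
    (𝒱 : LocalConvexityStructure Y) (p q : Y) : Type (v + 1) where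
  Z : Type v
  [ts : TopologicalSpace Z]
  e : Z → Y
  x : Z
  y : Z
  compact : CompactSpace Z
  etale : IsEtale 𝒱 e
  generates : Generates 𝒱 e {x, y}
  endpoint_left : e x = p
  endpoint_right : e y = q

/-- A subset `A ⊆ Y` is *weakly convex* if any two of its points are the end points of a
geodesic in `Y`. -/
def LocalConvexityStructure.WeaklyConvex {Y : Type v} [TopologicalSpace Y]
    (𝒱 : LocalConvexityStructure Y) (A : Set Y) : Prop :=
  ∀ p ∈ A, ∀ q ∈ A, Nonempty (GeodesicConnecting 𝒱 p q)

/-! Segments are compact: given an open cover of `C x y`, the set of `t ∈ C x y` for which `C x t`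
is covered by finitely many members is relatively clopen in the connected set `C x y`, since every
point has a convex neighbourhood inside one member and `C x s ⊆ C x t ∪ C t s` on the segment.

Segments therefore vary lower semicontinuously. Let `w ∈ C u v`, and let `B ∌ u, v` be an open
neighbourhood of `w`. The two halves of `C u v` meet only in `w`, so the compact sets `C u w \ B`
and `C w v \ B` have disjoint neighbourhoods `O₁ ∋ u` and `O₂ ∋ v`; by continuity of `C`, every
segment `C x y` with `x` near `u` and `y` near `v` lies in `O₁ ∪ O₂ ∪ B`, and being connected it
must meet `B`. Taking `x, y ∈ A` shows that every neighbourhood of `w` meets `A`. -/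

open Set Topology

theorem IsPreconnected.insert_inter_of_diff_singleton {α : Type*} [TopologicalSpace α]
    {G P Q : Set α} {w : α} (hG : IsPreconnected G) (hw : w ∈ G) (hP : IsOpen P)
    (hQ : IsOpen Q) (hcov : G \ {w} ⊆ P ∪ Q) (hdisj : G \ {w} ∩ (P ∩ Q) = ∅) :
    IsPreconnected (insert w (G ∩ P)) := by
  rw [isPreconnected_iff_subset_of_disjoint]
  intro u v hu hv huv hdisj'
  wlog hwu : w ∈ u generalizing u v
  · exact (this v u hv hu (union_comm u v ▸ huv) (inter_comm u v ▸ hdisj')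
      ((huv (mem_insert w _)).resolve_left hwu)).symm
  left
  have hGuQ : G ⊆ u ∪ Q := by
    refine (isPreconnected_iff_subset_of_disjoint.1 hG (u ∪ Q) (P ∩ v) (hu.union hQ)
      (hP.inter hv) ?_ ?_).resolve_right fun h => ?_
    · intro g hg
      by_cases hgw : g = w
      · exact Or.inl (Or.inl (hgw ▸ hwu))
      rcases hcov ⟨hg, hgw⟩ with hgP | hgQ
      · exact (huv (Or.inr ⟨hg, hgP⟩)).imp Or.inl fun hgv => ⟨hgP, hgv⟩
      · exact Or.inl (Or.inr hgQ)
    · refine eq_empty_of_forall_notMem ?_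
      rintro g ⟨hg, hgu | hgQ, hgP, hgv⟩
      · exact hdisj'.subset ⟨Or.inr ⟨hg, hgP⟩, hgu, hgv⟩
      · by_cases hgw : g = w
        · exact hdisj'.subset ⟨Or.inl hgw, hgw ▸ hwu, hgv⟩
        · exact hdisj.subset ⟨⟨hg, hgw⟩, hgP, hgQ⟩
    · exact hdisj'.subset ⟨mem_insert w _, hwu, (h hw).2⟩
  rintro g (rfl | ⟨hg, hgP⟩)
  · exact hwu
  by_cases hgw : g = w
  · exact hgw ▸ hwu
  exact (hGuQ hg).resolve_right fun hgQ => hdisj.subset ⟨⟨hg, hgw⟩, hgP, hgQ⟩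

namespace IsConvexitySpaceOn

variable {Y : Type*} [TopologicalSpace Y] {U : Set Y} {C : Y → Y → Set Y}
  (H : IsConvexitySpaceOn U C)
include H

theorem seg_symm {x y : Y} (hx : x ∈ U) (hy : y ∈ U) : C x y = C y x :=
  (H.convex y hy x hx x (H.mem_right y hy x hx) y (H.mem_left y hy x hx)).antisymm
    (H.convex x hx y hy y (H.mem_right x hx y hy) x (H.mem_left x hx y hy))

theorem seg_self {x : Y} (hx : x ∈ U) : C x x = {x} :=
  (H.minimal x hx x hx {x} (singleton_subset_iff.2 (H.mem_left x hx x hx)) rfl rfl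
    isPreconnected_singleton).symm

theorem seg_union {x y w : Y} (hx : x ∈ U) (hy : y ∈ U) (hw : w ∈ C x y) :
    C x w ∪ C w y = C x y := by
  have hwU : w ∈ U := H.segment_subset x hx y hy hw
  exact H.minimal x hx y hy _
    (union_subset (H.convex x hx y hy x (H.mem_left x hx y hy) w hw)
      (H.convex x hx y hy w hw y (H.mem_right x hx y hy)))
    (Or.inl (H.mem_left x hx w hwU)) (Or.inr (H.mem_right w hwU y hy))
    ((H.preconnected x hx w hwU).union w (H.mem_right x hx w hwU) (H.mem_left w hwU y hy)
      (H.preconnected w hwU y hy))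

/-- By (C2), the part of a separation of `C x w \ {w}` containing `x`, together with `w`,
is all of `C x w`. -/
theorem isPreconnected_seg_diff_right {x w : Y} (hx : x ∈ U) (hw : w ∈ U) :
    IsPreconnected (C x w \ {w}) := by
  rcases eq_or_ne x w with rfl | hxw
  · simp [H.seg_self hx, isPreconnected_empty]
  have key : ∀ P Q : Set Y, IsOpen P → IsOpen Q → C x w \ {w} ⊆ P ∪ Q →
      C x w \ {w} ∩ (P ∩ Q) = ∅ → x ∈ P → C x w \ {w} ⊆ P := by
    intro P Q hP hQ hcov hdisj hxP z ⟨hz, hzw⟩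
    have hfill := H.minimal x hx w hw (insert w (C x w ∩ P))
      (insert_subset (H.mem_right x hx w hw) inter_subset_left)
      (Or.inr ⟨H.mem_left x hx w hw, hxP⟩) (mem_insert w _)
      ((H.preconnected x hx w hw).insert_inter_of_diff_singleton (H.mem_right x hx w hw)
        hP hQ hcov hdisj)
    rw [← hfill] at hz
    exact (hz.resolve_left hzw).2
  rw [isPreconnected_iff_subset_of_disjoint]
  intro P Q hP hQ hcov hdisj
  rcases hcov ⟨H.mem_left x hx w hw, hxw⟩ with hxP | hxQ
  · exact Or.inl (key P Q hP hQ hcov hdisj hxP)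
  · exact Or.inr (key Q P hQ hP (union_comm P Q ▸ hcov) (inter_comm P Q ▸ hdisj) hxQ)

theorem seg_antisymm {x w p : Y} (hx : x ∈ U) (hw : w ∈ U) (hp : p ∈ U)
    (hpw : p ∈ C x w) (hwp : w ∈ C x p) : p = w := by
  by_contra hne
  have hxw : x ≠ w := by
    rintro rfl
    exact hne (by simpa [H.seg_self hx] using hpw)
  have hseg : C x w = C x p :=
    (H.convex x hx p hp x (H.mem_left x hx p hp) w hwp).antisymm
      (H.convex x hx w hw x (H.mem_left x hx w hw) p hpw)
  have hcut := H.minimal x hx p hp (C x w \ {w}) (hseg ▸ sdiff_subset)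
    ⟨H.mem_left x hx w hw, hxw⟩ ⟨hpw, hne⟩ (H.isPreconnected_seg_diff_right hx hw)
  exact (hcut ▸ hwp : w ∈ C x w \ {w}).2 rfl

theorem mem_seg_total {x y s t : Y} (hx : x ∈ U) (hy : y ∈ U) (hs : s ∈ C x y)
    (ht : t ∈ C x y) : s ∈ C x t ∨ t ∈ C x s := by
  have hsU := H.segment_subset x hx y hy hs
  have htU := H.segment_subset x hx y hy ht
  rcases (H.seg_union hx hy ht).symm ▸ hs with hst | hsty
  · exact Or.inl hst
  rcases (H.seg_union hx hy hs).symm ▸ ht with hts | htsy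
  · exact Or.inr hts
  have hts : s = t := H.seg_antisymm hy htU hsU (H.seg_symm hy htU ▸ hsty)
    (H.seg_symm hy hsU ▸ htsy)
  exact Or.inl (hts ▸ H.mem_right x hx s hsU)

theorem seg_subset_union {x y s t : Y} (hx : x ∈ U) (hy : y ∈ U) (hs : s ∈ C x y)
    (ht : t ∈ C x y) : C x s ⊆ C x t ∪ C t s := by
  have htU := H.segment_subset x hx y hy ht
  rcases H.mem_seg_total hx hy hs ht with hst | hts
  · exact (H.convex x hx t htU x (H.mem_left x hx t htU) s hst).trans subset_union_left
  · exact (H.seg_union hx (H.segment_subset x hx y hy hs) hts).symm.subset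

theorem seg_inter_seg_subset {x y w : Y} (hx : x ∈ U) (hy : y ∈ U) (hw : w ∈ C x y) :
    C x w ∩ C w y ⊆ {w} := by
  rintro p ⟨hpxw, hpwy⟩
  have hwU := H.segment_subset x hx y hy hw
  have hpU := H.segment_subset x hx w hwU hpxw
  have hp : p ∈ C x y := H.convex x hx y hy x (H.mem_left x hx y hy) w hw hpxw
  rcases (H.seg_union hx hy hp).symm ▸ hw with hwxp | hwpy
  · exact H.seg_antisymm hx hwU hpU hpxw hwxp
  · exact H.seg_antisymm hy hwU hpU (H.seg_symm hwU hy ▸ hpwy) (H.seg_symm hpU hy ▸ hwpy)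

theorem isCompact_seg {x y : Y} (hx : x ∈ U) (hy : y ∈ U) : IsCompact (C x y) := by
  classical
  rw [isCompact_iff_finite_subcover]
  intro ι V hV hcov
  let Covered : Y → Prop := fun t => ∃ F : Finset ι, C x t ⊆ ⋃ i ∈ F, V i
  have hlocal : ∀ t ∈ C x y, ∀ᶠ s in 𝓝[C x y] t,
      (Covered t → Covered s) ∧ (Covered s → Covered t) := by
    intro t ht
    obtain ⟨i, hti⟩ := mem_iUnion.1 (hcov ht)
    obtain ⟨B, hB, htB, hBV, hBconv⟩ :=
      H.basis t (H.segment_subset x hx y hy ht) (V i) (hV i) hti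
    have hspread : ∀ s ∈ C x y, ∀ s' ∈ C x y, s ∈ B → s' ∈ B → Covered s → Covered s' := by
      rintro s hs s' hs' hsB hs'B ⟨F, hF⟩
      refine ⟨insert i F, (H.seg_subset_union hx hy hs' hs).trans (union_subset ?_ ?_)⟩
      · exact hF.trans (biUnion_subset_biUnion_left (Finset.subset_insert i F))
      · exact (hBconv s hsB s' hs'B).trans <| (hBV.trans inter_subset_left).trans <|
          subset_biUnion_of_mem (u := V) (Finset.mem_insert_self i F)
    filter_upwards [self_mem_nhdsWithin, mem_nhdsWithin_of_mem_nhds (hB.mem_nhds htB)]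
      with s hs hsB
    exact ⟨hspread t ht s hs htB hsB, hspread s hs t ht hsB htB⟩
  have hcovered_x : Covered x := by
    obtain ⟨i, hxi⟩ := mem_iUnion.1 (hcov (H.mem_left x hx y hy))
    exact ⟨{i}, by simpa [H.seg_self hx] using hxi⟩
  exact (H.preconnected x hx y hy).induction₂' (fun a b => Covered a → Covered b) hlocal
    (fun _ _ _ _ _ _ hab hbc ha => hbc (hab ha)) (H.mem_left x hx y hy)
    (H.mem_right x hx y hy) hcovered_x

theorem t2Space : T2Space U := by
  refine ⟨fun a b hab => ?_⟩
  obtain ⟨V, W, hV, hW, haV, hbW, hVW⟩ := H.t2 a a.2 b b.2 (Subtype.coe_injective.ne hab)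
  refine ⟨(Subtype.val ⁻¹' V : Set U), Subtype.val ⁻¹' W, hV.preimage continuous_subtype_val,
    hW.preimage continuous_subtype_val, haV, hbW, disjoint_left.2 fun z hzV hzW => ?_⟩
  exact hVW.subset ⟨⟨hzV, hzW⟩, z.2⟩

theorem separatedNhds_of_isCompact {K L : Set Y} (hK : IsCompact K) (hL : IsCompact L)
    (hKU : K ⊆ U) (hLU : L ⊆ U) (hKL : Disjoint K L) : SeparatedNhds K L := by
  have := H.t2Space
  have hcompact : ∀ {S : Set Y}, IsCompact S → S ⊆ U → IsCompact ((↑) ⁻¹' S : Set U) :=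
    fun hS hSU => by rwa [Subtype.isCompact_iff, Subtype.image_preimage_coe, inter_eq_right.2 hSU]
  obtain ⟨O₁, O₂, hO₁, hO₂, hKO, hLO, hO⟩ :=
    SeparatedNhds.of_isCompact_isCompact (hcompact hK hKU) (hcompact hL hLU) (hKL.preimage _)
  have hval := H.isOpen.isOpenMap_subtype_val
  exact ⟨(↑) '' O₁, (↑) '' O₂, hval _ hO₁, hval _ hO₂,
    fun k hk => ⟨⟨k, hKU hk⟩, hKO hk, rfl⟩, fun l hl => ⟨⟨l, hLU hl⟩, hLO hl, rfl⟩,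
    (disjoint_image_iff Subtype.coe_injective).2 hO⟩

theorem separatedNhds_seg_diff {u v w : Y} (hu : u ∈ U) (hv : v ∈ U) (hw : w ∈ C u v)
    {B : Set Y} (hB : IsOpen B) (hwB : w ∈ B) : SeparatedNhds (C u w \ B) (C w v \ B) := by
  have hwU := H.segment_subset u hu v hv hw
  refine H.separatedNhds_of_isCompact ((H.isCompact_seg hu hwU).diff hB)
    ((H.isCompact_seg hwU hv).diff hB) (sdiff_subset.trans (H.segment_subset u hu w hwU))
    (sdiff_subset.trans (H.segment_subset w hwU v hv)) (disjoint_left.2 ?_)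
  rintro z ⟨hzuw, hzB⟩ ⟨hzwv, -⟩
  exact hzB (H.seg_inter_seg_subset hu hv hw ⟨hzuw, hzwv⟩ ▸ hwB)

theorem exists_seg_inter_nonempty {u v w : Y} (hu : u ∈ U) (hv : v ∈ U) (hw : w ∈ C u v)
    {B : Set Y} (hB : IsOpen B) (hwB : w ∈ B) :
    ∃ V₁ V₂ : Set Y, IsOpen V₁ ∧ IsOpen V₂ ∧ u ∈ V₁ ∧ v ∈ V₂ ∧
      ∀ x ∈ V₁ ∩ U, ∀ y ∈ V₂ ∩ U, (C x y ∩ B).Nonempty := by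
  by_cases huB : u ∈ B
  · exact ⟨B, univ, hB, isOpen_univ, huB, trivial,
      fun x hx y hy => ⟨x, H.mem_left x hx.2 y hy.2, hx.1⟩⟩
  by_cases hvB : v ∈ B
  · exact ⟨univ, B, isOpen_univ, hB, trivial, hvB,
      fun x hx y hy => ⟨y, H.mem_right x hx.2 y hy.2, hy.1⟩⟩
  have hwU := H.segment_subset u hu v hv hw
  obtain ⟨O₁, O₂, hO₁, hO₂, hsub₁, hsub₂, hO⟩ := H.separatedNhds_seg_diff hu hv hw hB hwB
  have hcov : C u v ⊆ O₁ ∪ O₂ ∪ B := by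
    rw [← H.seg_union hu hv hw]
    intro z hz
    by_cases hzB : z ∈ B
    · exact Or.inr hzB
    rcases hz with hz | hz
    · exact Or.inl (Or.inl (hsub₁ ⟨hz, hzB⟩))
    · exact Or.inl (Or.inr (hsub₂ ⟨hz, hzB⟩))
  obtain ⟨V₁, V₂, hV₁, hV₂, huV₁, hvV₂, hV⟩ :=
    H.continuity u hu v hv _ ((hO₁.union hO₂).union hB) hcov
  refine ⟨V₁ ∩ O₁, V₂ ∩ O₂, hV₁.inter hO₁, hV₂.inter hO₂,
    ⟨huV₁, hsub₁ ⟨H.mem_left u hu w hwU, huB⟩⟩, ⟨hvV₂, hsub₂ ⟨H.mem_right w hwU v hv, hvB⟩⟩, ?_⟩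
  rintro x ⟨⟨hxV, hxO⟩, hxU⟩ y ⟨⟨hyV, hyO⟩, hyU⟩
  by_contra hmiss
  have hsub : C x y ⊆ O₁ ∪ O₂ := fun z hz =>
    (hV x ⟨hxV, hxU⟩ y ⟨hyV, hyU⟩ hz).resolve_right fun hzB => hmiss ⟨z, hz, hzB⟩
  have hO₁xy := (H.preconnected x hxU y hyU).subset_left_of_subset_union hO₁ hO₂ hO hsub
    ⟨x, H.mem_left x hxU y hyU, hxO⟩
  exact disjoint_left.1 hO (hO₁xy (H.mem_right x hxU y hyU)) hyO

end IsConvexitySpaceOn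

/-- Proposition 6: Let `Y` be a topological space equipped with a local
convexity structure.  Then the closure of any convex subset of `Y` is convex. -/
theorem stmt_10 {Y : Type*} [TopologicalSpace Y] (𝒱 : LocalConvexityStructure Y)
    (A : Set Y) (hA : 𝒱.IsConvexSet A) :
    𝒱.IsConvexSet (closure A) := by
  rintro U hU u ⟨huA, huU⟩ v ⟨hvA, hvU⟩ w hw
  have H := 𝒱.convexity U hU
  refine ⟨mem_closure_iff.2 fun B hB hwB => ?_, H.segment_subset u huU v hvU hw⟩
  obtain ⟨V₁, V₂, hV₁, hV₂, huV₁, hvV₂, hmeet⟩ := H.exists_seg_inter_nonempty huU hvU hw hB hwB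
  obtain ⟨x, ⟨hxV, hxU⟩, hxA⟩ := mem_closure_iff.1 huA _ (hV₁.inter H.isOpen) ⟨huV₁, huU⟩
  obtain ⟨y, ⟨hyV, hyU⟩, hyA⟩ := mem_closure_iff.1 hvA _ (hV₂.inter H.isOpen) ⟨hvV₂, hvU⟩
  obtain ⟨z, hzxy, hzB⟩ := hmeet x ⟨hxV, hxU⟩ y ⟨hyV, hyU⟩
  exact ⟨z, hzB, (hA U hU x ⟨hxA, hxU⟩ y ⟨hyA, hyU⟩ hzxy).1⟩
end

section
/- (Lokal-global-Prinzip) Let f : X → Y be a locally convex continuous map from a connected topological space X to a geodesic q-manifold Y, and assume that the induced map f# : X^f → Y is a closed map. Then the image f(X) is weakly convex: any two points of f(X) are the end points of some geodesic in Y. -/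
universe u v w

/-- A continuous map `f : X → Y` into a space with a local convexity structure `𝒱` is
*locally convex* if every `x ∈ X` has an open neighbourhood `U` such that the induced map
`U → f(U)` is open and `f(U)` is a convex subspace of some chart `V ∈ 𝒱`. -/
def IsLocallyConvexMap {X Y : Type*} [TopologicalSpace X] [TopologicalSpace Y]
    (𝒱 : LocalConvexityStructure Y) (f : X → Y) : Prop :=
  ∀ x : X, ∃ U : Set X, IsOpen U ∧ x ∈ U ∧
    (∀ W : Set X, W ⊆ U → IsOpen W → ∃ O : Set Y, IsOpen O ∧ f '' W = O ∩ f '' U) ∧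
    ∃ V ∈ 𝒱.atlas, f '' U ⊆ V ∧ ∀ p ∈ f '' U, ∀ q ∈ f '' U, 𝒱.seg V p q ⊆ f '' U


/-!
Call `p, q ∈ Y` hull-connected if they lie in a finite set whose convex hull is connected. This
relation is transitive (the components of a convex set are convex) and relates any two points of a
chart, which `f` maps small open sets into; as `X` is connected, any two points of `f(X)` are
hull-connected.

If `hull F` is connected, `closure (hull F)` is a compact connected set, and it is convex because
in a geodesic q-manifold the closure of a convex set is convex. Zorn's lemma (a chain of continua
has a continuum as intersection) gives a minimal compact, connected, convex set `M ∋ p, q`. The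
inclusion `M ↪ Y` is a geodesic: convexity of `M` makes it étale and minimality makes it generated
by `{p, q}`.

Closures of convex sets are convex once segments are known to be closed. A segment `C a b` is
linearly ordered by `s ≤ t ↔ s ∈ C a t`, and a point `z ∈ closure (C a b) \ C a b` determines a cut
`c` of it, approached by points `p` with `z ∈ closure (C p c)`. If `z` lies in the chart,
regularity separates `z` from a convex neighbourhood of `c`; otherwise `⋂ closure (C p c)` is a
continuum containing `z ≠ c` that meets the chart only in `c`.
-/

open Set

section Topology

variable {α : Type*} [TopologicalSpace α]

theorem IsPreconnected.inter_union_singleton {s U₁ U₂ : Set α} (hs : IsPreconnected s) {x : α}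
    (hx : x ∈ s) (h₁ : IsOpen U₁) (h₂ : IsOpen U₂) (hcov : s \ {x} ⊆ U₁ ∪ U₂)
    (hdisj : s \ {x} ∩ (U₁ ∩ U₂) = ∅) : IsPreconnected (s ∩ U₁ ∪ {x}) := by
  set T := s ∩ U₁ ∪ {x}
  have hxT : x ∈ T := Or.inr rfl
  suffices key : ∀ A B : Set α, IsOpen A → IsOpen B → T ⊆ A ∪ B → x ∈ A →
      (T ∩ B).Nonempty → (T ∩ (A ∩ B)).Nonempty by
    intro A B hA hB hTAB hTA hTB
    rcases hTAB hxT with hxA | hxB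
    · exact key A B hA hB hTAB hxA hTB
    · obtain ⟨w, hwT, hwB, hwA⟩ := key B A hB hA (union_comm A B ▸ hTAB) hxB hTA
      exact ⟨w, hwT, hwA, hwB⟩
  intro A B hA hB hTAB hxA ⟨b, hbT, hbB⟩
  by_cases hxB : x ∈ B
  · exact ⟨x, hxT, hxA, hxB⟩
  have hb : b ∈ s ∩ U₁ := hbT.resolve_right fun h => hxB (h ▸ hbB)
  -- `U₂` may be added to the `A`-side: it meets `s` only away from `U₁`.
  have hscov : s ⊆ (A ∪ U₂) ∪ (B ∩ U₁) := by
    intro y hy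
    by_cases hyx : y = x
    · exact Or.inl (Or.inl (hyx ▸ hxA))
    rcases hcov ⟨hy, hyx⟩ with hyU₁ | hyU₂
    · rcases hTAB (Or.inl ⟨hy, hyU₁⟩) with hyA | hyB
      exacts [Or.inl (Or.inl hyA), Or.inr ⟨hyB, hyU₁⟩]
    · exact Or.inl (Or.inr hyU₂)
  obtain ⟨w, hws, hwAU₂, hwB, hwU₁⟩ := hs _ _ (hA.union h₂) (hB.inter h₁) hscov
    ⟨x, hx, Or.inl hxA⟩ ⟨b, hb.1, hbB, hb.2⟩
  rcases hwAU₂ with hwA | hwU₂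
  · exact ⟨w, Or.inl ⟨hws, hwU₁⟩, hwA, hwB⟩
  · have hwx : w ≠ x := fun h => hxB (h ▸ hwB)
    exact ((hdisj ▸ ⟨⟨hws, hwx⟩, hwU₁, hwU₂⟩ : w ∈ (∅ : Set α))).elim

theorem isPreconnected_iInter_of_directed [T2Space α] {ι : Type*} [Nonempty ι] {T : ι → Set α}
    (hdir : Directed (· ⊇ ·) T) (hcpt : ∀ i, IsCompact (T i)) (hpc : ∀ i, IsPreconnected (T i)) :
    IsPreconnected (⋂ i, T i) := by
  have hcl : IsClosed (⋂ i, T i) := isClosed_iInter fun i => (hcpt i).isClosed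
  obtain ⟨i₀⟩ := ‹Nonempty ι›
  have hN : IsCompact (⋂ i, T i) := (hcpt i₀).of_isClosed_subset hcl (iInter_subset _ _)
  rw [isPreconnected_iff_subset_of_fully_disjoint_closed hcl]
  intro u v hu hv huv hdisj
  obtain ⟨G₁, G₂, hG₁, hG₂, huG, hvG, hG⟩ := SeparatedNhds.of_isCompact_isCompact
    (hN.inter_right hu) (hN.inter_right hv) (hdisj.mono inter_subset_right inter_subset_right)
  have hcov : ∀ x ∈ ⋂ i, T i, x ∈ G₁ ∪ G₂ := fun x hx =>
    (huv hx).imp (fun h => huG ⟨hx, h⟩) (fun h => hvG ⟨hx, h⟩)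
  obtain ⟨i, hi⟩ := exists_subset_nhds_of_isCompact hdir hcpt
    fun x hx => (hG₁.union hG₂).mem_nhds (hcov x hx)
  rcases (hpc i).subset_or_subset hG₁ hG₂ hG hi with h | h
  · refine Or.inl fun x hx => (huv hx).resolve_right fun hxv => ?_
    exact hG.notMem_of_mem_left (h (iInter_subset T i hx)) (hvG ⟨hx, hxv⟩)
  · refine Or.inr fun x hx => (huv hx).resolve_left fun hxu => ?_
    exact hG.notMem_of_mem_left (huG ⟨hx, hxu⟩) (h (iInter_subset T i hx))

theorem IsCompact.exists_separation_of_notMem_connectedComponentIn [T2Space α] {K : Set α}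
    (hK : IsCompact K) {u v : α} (hu : u ∈ K) (hv : v ∈ K)
    (huv : v ∉ connectedComponentIn K u) :
    ∃ W₁ W₂ : Set α, IsOpen W₁ ∧ IsOpen W₂ ∧ Disjoint W₁ W₂ ∧ K ⊆ W₁ ∪ W₂ ∧ u ∈ W₁ ∧ v ∈ W₂ := by
  have := isCompact_iff_compactSpace.mp hK
  have hcomp : (⟨v, hv⟩ : K) ∉ connectedComponent (⟨u, hu⟩ : K) := fun h =>
    huv (connectedComponentIn_eq_image hu ▸ ⟨_, h, rfl⟩)
  rw [connectedComponent_eq_iInter_isClopen, mem_iInter] at hcomp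
  obtain ⟨⟨D, hD, huD⟩, hvD⟩ := not_forall.mp hcomp
  obtain ⟨W₁, W₂, hW₁, hW₂, hDW₁, hDW₂, hW⟩ := SeparatedNhds.of_isCompact_isCompact
    (hD.isClosed.isCompact.image continuous_subtype_val)
    (hD.isOpen.isClosed_compl.isCompact.image continuous_subtype_val)
    (disjoint_image_of_injective Subtype.val_injective disjoint_compl_right)
  refine ⟨W₁, W₂, hW₁, hW₂, hW, fun x hx => ?_, hDW₁ ⟨_, huD, rfl⟩, hDW₂ ⟨_, hvD, rfl⟩⟩
  by_cases hxD : (⟨x, hx⟩ : K) ∈ D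
  exacts [Or.inl (hDW₁ ⟨_, hxD, rfl⟩), Or.inr (hDW₂ ⟨_, hxD, rfl⟩)]

end Topology

namespace IsConvexitySpaceOn

variable {Y : Type*} [TopologicalSpace Y] {V : Set Y} {C : Y → Y → Set Y}
  (hC : IsConvexitySpaceOn V C) {a b c d s t w x y z : Y}
include hC

theorem seg_self_s18 (ha : a ∈ V) : C a a = {a} :=
  (hC.minimal a ha a ha {a} (singleton_subset_iff.2 (hC.mem_left a ha a ha)) rfl rfl
    isPreconnected_singleton).symm

theorem comm (ha : a ∈ V) (hb : b ∈ V) : C a b = C b a :=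
  (hC.convex b hb a ha a (hC.mem_right b hb a ha) b (hC.mem_left b hb a ha)).antisymm
    (hC.convex a ha b hb b (hC.mem_right a ha b hb) a (hC.mem_left a ha b hb))

theorem seg_union_seg (ha : a ∈ V) (hb : b ∈ V) (hw : w ∈ C a b) : C a w ∪ C w b = C a b := by
  have hwV : w ∈ V := hC.segment_subset a ha b hb hw
  refine hC.minimal a ha b hb _ ?_ (Or.inl (hC.mem_left a ha w hwV))
    (Or.inr (hC.mem_right w hwV b hb)) ?_
  · exact union_subset (hC.convex a ha b hb a (hC.mem_left a ha b hb) w hw)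
      (hC.convex a ha b hb w hw b (hC.mem_right a ha b hb))
  · exact (hC.preconnected a ha w hwV).union w (hC.mem_right a ha w hwV)
      (hC.mem_left w hwV b hb) (hC.preconnected w hwV b hb)

theorem seg_ne_of_mem (hc : c ∈ V) (hd : d ∈ V) (hw : w ∈ C c d) (hwc : w ≠ c) (hwd : w ≠ d) :
    C c w ≠ C c d := by
  intro heq
  have hwV : w ∈ V := hC.segment_subset c hc d hd hw
  have hcS : c ∈ C c d \ {w} := ⟨hC.mem_left c hc d hd, hwc.symm⟩
  have hdS : d ∈ C c d \ {w} := ⟨hC.mem_right c hc d hd, hwd.symm⟩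
  have hdisc : ¬ IsPreconnected (C c d \ {w}) := by
    intro hpre
    rw [← hC.minimal c hc d hd _ sdiff_subset hcS hdS hpre] at hw
    exact hw.2 rfl
  simp only [IsPreconnected, not_forall, exists_prop, not_nonempty_iff_eq_empty] at hdisc
  obtain ⟨U₁, U₂, hU₁, hU₂, hcov, hne₁, hne₂, hempty⟩ := hdisc
  wlog hcU₁ : c ∈ U₁ generalizing U₁ U₂
  · exact this U₂ U₁ hU₂ hU₁ (union_comm U₁ U₂ ▸ hcov) hne₂ hne₁ (inter_comm U₁ U₂ ▸ hempty)
      ((hcov hcS).resolve_left hcU₁)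
  have hhalf : C c d ∩ U₁ ∪ {w} = C c w := by
    refine hC.minimal c hc w hwV _ ?_ (Or.inl ⟨hcS.1, hcU₁⟩) (Or.inr rfl)
      ((hC.preconnected c hc d hd).inter_union_singleton hw hU₁ hU₂ hcov hempty)
    rw [heq]
    exact union_subset inter_subset_left (singleton_subset_iff.2 hw)
  obtain ⟨y, hyS, hyU₂⟩ := hne₂
  rcases (hhalf ▸ heq ▸ hyS.1 : y ∈ C c d ∩ U₁ ∪ {w}) with ⟨-, hyU₁⟩ | rfl
  · exact (hempty ▸ ⟨hyS, hyU₁, hyU₂⟩ : y ∈ (∅ : Set Y)).elim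
  · exact hyS.2 rfl

theorem eq_of_mem_seg_of_mem_seg (ha : a ∈ V) (hs : s ∈ V) (ht : t ∈ V) (hst : s ∈ C a t)
    (hts : t ∈ C a s) : s = t := by
  by_contra hne
  have heq : C a s = C a t :=
    (hC.convex a ha t ht a (hC.mem_left a ha t ht) s hst).antisymm
      (hC.convex a ha s hs a (hC.mem_left a ha s hs) t hts)
  have hsa : s ≠ a := by
    rintro rfl
    rw [hC.seg_self_s18 hs] at hts
    exact hne hts.symm
  exact hC.seg_ne_of_mem ha ht hst hsa hne heq

theorem mem_seg_iff_mem_seg (ha : a ∈ V) (hb : b ∈ V) (hs : s ∈ C a b) (ht : t ∈ C a b) :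
    s ∈ C a t ↔ t ∈ C s b := by
  have hsV : s ∈ V := hC.segment_subset a ha b hb hs
  have htV : t ∈ V := hC.segment_subset a ha b hb ht
  constructor
  · intro hst
    rcases (hC.seg_union_seg ha hb hs).symm ▸ ht with hts | hts
    · rw [hC.eq_of_mem_seg_of_mem_seg ha hsV htV hst hts]
      exact hC.mem_left t htV b hb
    · exact hts
  · intro hts
    rcases (hC.seg_union_seg ha hb ht).symm ▸ hs with hst | hst
    · exact hst
    · rw [hC.eq_of_mem_seg_of_mem_seg hb hsV htV (hC.comm htV hb ▸ hst) (hC.comm hsV hb ▸ hts)]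
      exact hC.mem_right a ha t htV

theorem mem_seg_or_mem_seg (ha : a ∈ V) (hb : b ∈ V) (hs : s ∈ C a b) (ht : t ∈ C a b) :
    s ∈ C a t ∨ t ∈ C a s :=
  ((hC.seg_union_seg ha hb hs).symm ▸ ht).symm.imp_left
    (hC.mem_seg_iff_mem_seg ha hb hs ht).mpr

theorem mem_seg_of_mem_seg_of_mem_seg (ha : a ∈ V) (hb : b ∈ V) (hs : s ∈ C a b)
    (hx : x ∈ C a b) (ht : t ∈ C a b) (hsx : s ∈ C a x) (hxt : x ∈ C a t) : x ∈ C s t := by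
  have hsV : s ∈ V := hC.segment_subset a ha b hb hs
  have htV : t ∈ V := hC.segment_subset a ha b hb ht
  have hst : s ∈ C a t := hC.convex a ha t htV a (hC.mem_left a ha t htV) x hxt hsx
  have htsb : t ∈ C s b := (hC.mem_seg_iff_mem_seg ha hb hs ht).mp hst
  rcases (hC.seg_union_seg (hC.segment_subset a ha b hb hs) hb htsb).symm ▸
    (hC.mem_seg_iff_mem_seg ha hb hs hx).mp hsx with hxst | hxtb
  · exact hxst
  · rw [hC.eq_of_mem_seg_of_mem_seg ha (hC.segment_subset a ha b hb hx) htV hxt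
      ((hC.mem_seg_iff_mem_seg ha hb ht hx).mpr hxtb)]
    exact hC.mem_right s hsV t htV

theorem mem_seg_and_mem_seg_of_mem_seg (ha : a ∈ V) (hb : b ∈ V) (hs : s ∈ C a b)
    (ht : t ∈ C a b) (hst : s ∈ C a t) (hx : x ∈ C s t) : s ∈ C a x ∧ x ∈ C a t := by
  have hsV : s ∈ V := hC.segment_subset a ha b hb hs
  have htV : t ∈ V := hC.segment_subset a ha b hb ht
  have htsb : t ∈ C s b := (hC.mem_seg_iff_mem_seg ha hb hs ht).mp hst
  refine ⟨(hC.mem_seg_iff_mem_seg ha hb hs (hC.convex a ha b hb s hs t ht hx)).mpr ?_,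
    hC.convex a ha t htV s hst t (hC.mem_right a ha t htV) hx⟩
  exact hC.convex s hsV b hb s (hC.mem_left s hsV b hb) t htsb hx

theorem eq_of_forall_mem_seg [T1Space Y] {Q : Set Y} (hx : x ∈ V) (hQ : x ∈ closure Q)
    (h : ∀ q ∈ Q, y ∈ C q x) : y = x := by
  by_contra hyx
  obtain ⟨W, hWo, hxW, hWsub, hWc⟩ := hC.basis x hx {y}ᶜ isOpen_compl_singleton (Ne.symm hyx)
  obtain ⟨q, hqW, hqQ⟩ := mem_closure_iff.mp hQ W hWo hxW
  exact (hWsub (hWc q hqW x hxW (h q hqQ))).1 rfl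

theorem closure_seg_inter_subset [T1Space Y] (ha : a ∈ V) (hb : b ∈ V) (hs : s ∈ C a b)
    (ht : t ∈ C a b) : closure (C s t) ∩ C a b ⊆ C s t := by
  have hsV : s ∈ V := hC.segment_subset a ha b hb hs
  have htV : t ∈ V := hC.segment_subset a ha b hb ht
  wlog hst : s ∈ C a t generalizing s t
  · rw [hC.comm hsV htV]
    exact this ht hs htV hsV ((hC.mem_seg_or_mem_seg ha hb hs ht).resolve_left hst)
  rintro x ⟨hxcl, hx⟩
  have hxV : x ∈ V := hC.segment_subset a ha b hb hx
  have hle : ∀ q ∈ C s t, s ∈ C a q ∧ q ∈ C a t :=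
    fun q hq => hC.mem_seg_and_mem_seg_of_mem_seg ha hb hs ht hst hq
  have hqS : ∀ q ∈ C s t, q ∈ C a b := fun q hq => hC.convex a ha b hb s hs t ht hq
  -- A point of `C a b` outside `C s t` is separated from it by `s` or by `t`.
  rcases hC.mem_seg_or_mem_seg ha hb hx ht with hxt | htx
  · rcases hC.mem_seg_or_mem_seg ha hb hx hs with hxs | hsx
    · have := hC.eq_of_forall_mem_seg hxV hxcl fun q hq => (hC.comm (hC.segment_subset a ha b hb
        (hqS q hq)) hxV) ▸ hC.mem_seg_of_mem_seg_of_mem_seg ha hb hx hs (hqS q hq) hxs (hle q hq).1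
      exact this ▸ hC.mem_left s hsV t htV
    · exact hC.mem_seg_of_mem_seg_of_mem_seg ha hb hs hx ht hsx hxt
  · have := hC.eq_of_forall_mem_seg hxV hxcl fun q hq =>
      hC.mem_seg_of_mem_seg_of_mem_seg ha hb (hqS q hq) ht hx (hle q hq).2 htx
    exact this ▸ hC.mem_right s hsV t htV

theorem seg_subset_or_subset {e p p' : Y} (he : e ∈ V) (hc : c ∈ V) (hp : p ∈ C e c)
    (hp' : p' ∈ C e c) : C p c ⊆ C p' c ∨ C p' c ⊆ C p c := by
  have hcS := hC.mem_right e he c hc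
  rcases hC.mem_seg_or_mem_seg he hc hp hp' with h | h
  · exact Or.inr (hC.convex p (hC.segment_subset e he c hc hp) c hc p'
      (hC.mem_seg_of_mem_seg_of_mem_seg he hc hp hp' hcS h hp') c
      (hC.mem_right p (hC.segment_subset e he c hc hp) c hc))
  · exact Or.inl (hC.convex p' (hC.segment_subset e he c hc hp') c hc p
      (hC.mem_seg_of_mem_seg_of_mem_seg he hc hp' hp hcS h hp) c
      (hC.mem_right p' (hC.segment_subset e he c hc hp') c hc))

theorem mem_closure_seg_of_notMem_closure_seg {u : Y} (ha : a ∈ V) (hu : u ∈ V)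
    (ht : t ∈ C a u) (hz : z ∈ closure (C a u)) (hzt : z ∉ closure (C a t)) :
    z ∈ closure (C t u) := by
  rw [← hC.seg_union_seg ha hu ht, closure_union] at hz
  exact hz.resolve_left hzt

theorem exists_cut [T1Space Y] (ha : a ∈ V) (hb : b ∈ V) (hz : z ∈ closure (C a b))
    (hzS : z ∉ C a b) :
    ∃ c ∈ C a b, ∃ P ⊆ C a b, P.Nonempty ∧ c ∈ closure P ∧
      (∀ p ∈ P, ∀ p' ∈ P, C p c ⊆ C p' c ∨ C p' c ⊆ C p c) ∧ ∀ p ∈ P, z ∈ closure (C p c) := by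
  have hV : ∀ {s}, s ∈ C a b → s ∈ V := fun hs => hC.segment_subset a ha b hb hs
  set L := {s ∈ C a b | z ∉ closure (C a s)}
  set R := {s ∈ C a b | z ∈ closure (C a s)}
  have haL : a ∈ L := by
    refine ⟨hC.mem_left a ha b hb, ?_⟩
    rw [hC.seg_self_s18 ha, closure_singleton]
    rintro rfl
    exact hzS (hC.mem_left z ha b hb)
  have hbR : b ∈ R := ⟨hC.mem_right a ha b hb, hz⟩
  have hLR : ∀ l ∈ L, ∀ r ∈ R, l ∈ C a r := fun l hl r hr =>
    (hC.mem_seg_or_mem_seg ha hb hl.1 hr.1).resolve_right fun hrl =>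
      hl.2 (closure_mono (hC.convex a ha l (hV hl.1) a (hC.mem_left a ha l (hV hl.1)) r hrl) hr.2)
  -- `C a b = L ∪ R` is connected, so one part meets the closure of the other.
  obtain ⟨c, ⟨hcR, hcL⟩ | ⟨hcL, hcR⟩⟩ : ∃ c, c ∈ R ∧ c ∈ closure L ∨ c ∈ L ∧ c ∈ closure R := by
    by_contra! h
    obtain ⟨w, hwS, hwR, hwL⟩ := hC.preconnected a ha b hb (closure R)ᶜ (closure L)ᶜ
      isClosed_closure.isOpen_compl isClosed_closure.isOpen_compl
      (fun x hx => by
        by_cases hxz : z ∈ closure (C a x)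
        exacts [Or.inr ((h x).1 ⟨hx, hxz⟩), Or.inl ((h x).2 ⟨hx, hxz⟩)])
      ⟨a, hC.mem_left a ha b hb, (h a).2 haL⟩ ⟨b, hC.mem_right a ha b hb, (h b).1 hbR⟩
    by_cases hwz : z ∈ closure (C a w)
    exacts [hwR (subset_closure ⟨hwS, hwz⟩), hwL (subset_closure ⟨hwS, hwz⟩)]
  · refine ⟨c, hcR.1, L, sep_subset _ _, ⟨a, haL⟩, hcL, fun p hp p' hp' =>
      hC.seg_subset_or_subset ha (hV hcR.1) (hLR p hp c hcR) (hLR p' hp' c hcR), fun p hp =>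
      hC.mem_closure_seg_of_notMem_closure_seg ha (hV hcR.1) (hLR p hp c hcR) hcR.2 hp.2⟩
  · have hRb : ∀ p ∈ R, p ∈ C b c := fun p hp =>
      hC.comm (hV hcL.1) hb ▸ (hC.mem_seg_iff_mem_seg ha hb hcL.1 hp.1).mp (hLR c hcL p hp)
    refine ⟨c, hcL.1, R, sep_subset _ _, ⟨b, hbR⟩, hcR, fun p hp p' hp' =>
      hC.seg_subset_or_subset hb (hV hcL.1) (hRb p hp) (hRb p' hp'), fun p hp => ?_⟩
    rw [hC.comm (hV hp.1) (hV hcL.1)]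
    exact hC.mem_closure_seg_of_notMem_closure_seg ha (hV hp.1) (hLR c hcL p hp) hp.2 hcL.2

end IsConvexitySpaceOn

namespace LocalConvexityStructure

variable {Y : Type*} [TopologicalSpace Y] (𝒱 : LocalConvexityStructure Y) {V A F G : Set Y}
  {p q r u v : Y}

theorem IsConvexSet.seg_subset (hA : 𝒱.IsConvexSet A) (hV : V ∈ 𝒱.atlas) (hu : u ∈ A)
    (huV : u ∈ V) (hv : v ∈ A) (hvV : v ∈ V) : 𝒱.seg V u v ⊆ A :=
  fun _ hx => (hA V hV u ⟨hu, huV⟩ v ⟨hv, hvV⟩ hx).1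

theorem isConvexSet_sInter {S : Set (Set Y)} (hS : ∀ A ∈ S, 𝒱.IsConvexSet A) :
    𝒱.IsConvexSet (⋂₀ S) := fun V hV u hu v hv =>
  subset_inter (subset_sInter fun A hA =>
      (hS A hA).seg_subset 𝒱 hV (hu.1 A hA) hu.2 (hv.1 A hA) hv.2)
    ((𝒱.convexity V hV).segment_subset u hu.2 v hv.2)

theorem subset_hull (F : Set Y) : F ⊆ 𝒱.hull F :=
  fun _ hx => mem_sInter.2 fun _ hB => hB.1 hx

theorem hull_subset (hFA : F ⊆ A) (hA : 𝒱.IsConvexSet A) : 𝒱.hull F ⊆ A :=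
  sInter_subset_of_mem ⟨hFA, hA⟩

theorem isConvexSet_hull (F : Set Y) : 𝒱.IsConvexSet (𝒱.hull F) :=
  𝒱.isConvexSet_sInter fun _ hB => hB.2

theorem hull_mono (hFG : F ⊆ G) : 𝒱.hull F ⊆ 𝒱.hull G :=
  𝒱.hull_subset (hFG.trans (𝒱.subset_hull G)) (𝒱.isConvexSet_hull G)

theorem IsConvexSet.connectedComponentIn (hA : 𝒱.IsConvexSet A) (x : Y) :
    𝒱.IsConvexSet (connectedComponentIn A x) := by
  intro V hV u ⟨hu, huV⟩ v ⟨hv, hvV⟩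
  have hC := 𝒱.convexity V hV
  have hseg : 𝒱.seg V u v ⊆ A := hA.seg_subset 𝒱 hV (connectedComponentIn_subset A x hu) huV
    (connectedComponentIn_subset A x hv) hvV
  refine subset_inter ?_ (hC.segment_subset u huV v hvV)
  rw [connectedComponentIn_eq hu]
  exact subset_union_right.trans <| (isPreconnected_connectedComponentIn.union u
    (mem_connectedComponentIn (connectedComponentIn_subset A x hu)) (hC.mem_left u huV v hvV)
    (hC.preconnected u huV v hvV)).subset_connectedComponentIn (Or.inr (hC.mem_left u huV v hvV))
    (union_subset (connectedComponentIn_subset _ _) hseg)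

theorem isPreconnected_hull_of_subset_connectedComponentIn {x : Y}
    (hF : F ⊆ connectedComponentIn (𝒱.hull F) x) : IsPreconnected (𝒱.hull F) := by
  rw [← (connectedComponentIn_subset _ x).antisymm
    (𝒱.hull_subset hF ((𝒱.isConvexSet_hull F).connectedComponentIn 𝒱 x))]
  exact isPreconnected_connectedComponentIn

def HullConnected (p q : Y) : Prop :=
  ∃ F : Set Y, F.Finite ∧ p ∈ F ∧ q ∈ F ∧ IsPreconnected (𝒱.hull F)

variable {𝒱}

theorem HullConnected.trans (hpq : 𝒱.HullConnected p q) (hqr : 𝒱.HullConnected q r) :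
    𝒱.HullConnected p r := by
  obtain ⟨F, hF, hpF, hqF, hFc⟩ := hpq
  obtain ⟨G, hG, hqG, hrG, hGc⟩ := hqr
  refine ⟨F ∪ G, hF.union hG, Or.inl hpF, Or.inr hrG,
    𝒱.isPreconnected_hull_of_subset_connectedComponentIn (x := q) ?_⟩
  have hFG : 𝒱.hull F ∪ 𝒱.hull G ⊆ connectedComponentIn (𝒱.hull (F ∪ G)) q :=
    (hFc.union q (𝒱.subset_hull F hqF) (𝒱.subset_hull G hqG) hGc).subset_connectedComponentIn
      (Or.inl (𝒱.subset_hull F hqF))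
      (union_subset (𝒱.hull_mono subset_union_left) (𝒱.hull_mono subset_union_right))
  exact (union_subset_union (𝒱.subset_hull F) (𝒱.subset_hull G)).trans hFG

theorem hullConnected_of_mem_chart (hV : V ∈ 𝒱.atlas) (hp : p ∈ V) (hq : q ∈ V) :
    𝒱.HullConnected p q := by
  have hC := 𝒱.convexity V hV
  refine ⟨{p, q}, (finite_singleton q).insert p, mem_insert p _, mem_insert_of_mem p rfl,
    𝒱.isPreconnected_hull_of_subset_connectedComponentIn (x := p) ?_⟩
  refine (insert_subset (hC.mem_left p hp q hq)
    (singleton_subset_iff.2 (hC.mem_right p hp q hq))).trans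
    ((hC.preconnected p hp q hq).subset_connectedComponentIn (hC.mem_left p hp q hq) ?_)
  exact (𝒱.isConvexSet_hull _).seg_subset 𝒱 hV (𝒱.subset_hull _ (mem_insert p _)) hp
    (𝒱.subset_hull _ (mem_insert_of_mem p rfl)) hq

end LocalConvexityStructure

namespace IsGeodesicQManifold

open LocalConvexityStructure

variable {Y : Type*} [TopologicalSpace Y] {𝒱 : LocalConvexityStructure Y}
  (hY : IsGeodesicQManifold 𝒱) {V P H : Set Y} {a b c z : Y}
include hY

theorem isCompact_closure_seg (hV : V ∈ 𝒱.atlas) (ha : a ∈ V) (hb : b ∈ V) :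
    IsCompact (closure (𝒱.seg V a b)) :=
  (hY.hull_compact {a, b} ((finite_singleton b).insert a)).of_isClosed_subset isClosed_closure <|
    closure_mono <| (𝒱.isConvexSet_hull _).seg_subset 𝒱 hV (𝒱.subset_hull _ (mem_insert a _)) ha
      (𝒱.subset_hull _ (mem_insert_of_mem a rfl)) hb

theorem exists_convex_nhds_notMem_closure (hV : V ∈ 𝒱.atlas) (hc : c ∈ V) (hz : z ∈ V)
    (hzc : z ≠ c) : ∃ W : Set Y, IsOpen W ∧ c ∈ W ∧ (∀ u ∈ W, ∀ v ∈ W, 𝒱.seg V u v ⊆ W) ∧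
      z ∉ closure W := by
  have := hY.regular V hV
  have := hY.t2
  have hC := 𝒱.convexity V hV
  obtain ⟨t, ht, htc, htz⟩ := exists_mem_nhds_isClosed_subset (isOpen_compl_singleton.mem_nhds
    (fun h => hzc (congrArg Subtype.val h).symm : (⟨c, hc⟩ : V) ∈ {(⟨z, hz⟩ : V)}ᶜ))
  obtain ⟨O, hOt, hOo, hcO⟩ :=
    mem_nhds_iff.1 (hC.isOpen.isOpenEmbedding_subtypeVal.image_mem_nhds.2 ht)
  obtain ⟨W, hWo, hcW, hWsub, hWc⟩ := hC.basis c hc O hOo hcO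
  refine ⟨W, hWo, hcW, hWc, fun hzW => ?_⟩
  have hzW' : (⟨z, hz⟩ : V) ∈ closure (Subtype.val ⁻¹' W) := by
    rwa [closure_subtype, Subtype.image_preimage_coe, inter_eq_right.2 fun x hx => (hWsub hx).2]
  have hWt : Subtype.val ⁻¹' W ⊆ t := fun x hx => by
    obtain ⟨y, hy, hyx⟩ := hOt (hWsub hx).1
    exact Subtype.val_injective hyx ▸ hy
  exact htz (htc.closure_subset_iff.2 hWt hzW') rfl

theorem eq_of_forall_mem_closure_seg_of_mem_chart (hV : V ∈ 𝒱.atlas) (hc : c ∈ V) (hz : z ∈ V)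
    (hcP : c ∈ closure P) (h : ∀ p ∈ P, z ∈ closure (𝒱.seg V p c)) : z = c := by
  by_contra hzc
  obtain ⟨W, hWo, hcW, hWc, hzW⟩ := hY.exists_convex_nhds_notMem_closure hV hc hz hzc
  obtain ⟨p, hpW, hpP⟩ := mem_closure_iff.mp hcP W hWo hcW
  exact hzW (closure_mono (hWc p hpW c hcW) (h p hpP))

/-- If `z` lies outside the chart, the continuum `⋂ p ∈ P, closure (C p c)` contains `z` but,
`P` accumulating at `c`, meets the chart only in `c`; so `c` would be isolated in it. -/
theorem eq_of_forall_mem_closure_seg (hV : V ∈ 𝒱.atlas) (ha : a ∈ V) (hb : b ∈ V)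
    (hS : closure (𝒱.seg V a b) ∩ V ⊆ 𝒱.seg V a b) (hc : c ∈ 𝒱.seg V a b)
    (hP : P ⊆ 𝒱.seg V a b) (hPne : P.Nonempty) (hcP : c ∈ closure P)
    (hdir : ∀ p ∈ P, ∀ p' ∈ P, 𝒱.seg V p c ⊆ 𝒱.seg V p' c ∨ 𝒱.seg V p' c ⊆ 𝒱.seg V p c)
    (h : ∀ p ∈ P, z ∈ closure (𝒱.seg V p c)) : z = c := by
  have := hY.t2
  have hC := 𝒱.convexity V hV
  have hcV : c ∈ V := hC.segment_subset a ha b hb hc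
  have hpV : ∀ p ∈ P, p ∈ V := fun p hp => hC.segment_subset a ha b hb (hP hp)
  have : Nonempty P := hPne.to_subtype
  set T := ⋂ p : P, closure (𝒱.seg V p c)
  have hTc : IsPreconnected T := by
    refine isPreconnected_iInter_of_directed (fun p p' => ?_)
      (fun p => hY.isCompact_closure_seg hV (hpV p p.2) hcV)
      (fun p => (hC.preconnected p (hpV p p.2) c hcV).closure)
    rcases hdir p p.2 p' p'.2 with h' | h'
    exacts [⟨p, subset_rfl, closure_mono h'⟩, ⟨p', closure_mono h', subset_rfl⟩]
  have hTV : T ∩ V ⊆ {c} := by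
    rintro x ⟨hxT, hxV⟩
    have hxS : x ∈ 𝒱.seg V a b := hS ⟨closure_mono (hC.convex a ha b hb _ (hP hPne.some_mem) c hc)
      (mem_iInter.1 hxT ⟨_, hPne.some_mem⟩), hxV⟩
    exact hC.eq_of_forall_mem_seg hcV hcP fun p hp =>
      hC.closure_seg_inter_subset ha hb (hP hp) hc ⟨mem_iInter.1 hxT ⟨p, hp⟩, hxS⟩
  have hcT : c ∈ T := mem_iInter.2 fun p => subset_closure (hC.mem_right p (hpV p p.2) c hcV)
  by_contra hzc
  obtain ⟨x, hxT, hxV, hxc⟩ := hTc V {c}ᶜ hC.isOpen isOpen_compl_singleton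
    (fun x _ => (em (x = c)).elim (fun h => Or.inl (h ▸ hcV)) Or.inr) ⟨c, hcT, hcV⟩
    ⟨z, mem_iInter.2 fun p => h p p.2, hzc⟩
  exact hxc (hTV ⟨hxT, hxV⟩)

theorem closure_seg_inter_subset (hV : V ∈ 𝒱.atlas) (ha : a ∈ V) (hb : b ∈ V) :
    closure (𝒱.seg V a b) ∩ V ⊆ 𝒱.seg V a b := by
  have := hY.t2
  rintro z ⟨hz, hzV⟩
  by_contra hzS
  obtain ⟨c, hc, P, -, -, hcP, -, hzP⟩ := (𝒱.convexity V hV).exists_cut ha hb hz hzS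
  have hcV : c ∈ V := (𝒱.convexity V hV).segment_subset a ha b hb hc
  exact hzS (hY.eq_of_forall_mem_closure_seg_of_mem_chart hV hcV hzV hcP hzP ▸ hc)

theorem isClosed_seg (hV : V ∈ 𝒱.atlas) (ha : a ∈ V) (hb : b ∈ V) :
    IsClosed (𝒱.seg V a b) := by
  have := hY.t2
  refine closure_subset_iff_isClosed.1 fun z hz => ?_
  by_contra hzS
  obtain ⟨c, hc, P, hP, hPne, hcP, hdir, hzP⟩ := (𝒱.convexity V hV).exists_cut ha hb hz hzS
  exact hzS (hY.eq_of_forall_mem_closure_seg hV ha hb (hY.closure_seg_inter_subset hV ha hb) hc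
    hP hPne hcP hdir hzP ▸ hc)

theorem isCompact_seg (hV : V ∈ 𝒱.atlas) (ha : a ∈ V) (hb : b ∈ V) :
    IsCompact (𝒱.seg V a b) :=
  (hY.isClosed_seg hV ha hb).closure_eq ▸ hY.isCompact_closure_seg hV ha hb

/-- If `C u v` left `closure H`, the part of `C u v` inside `closure H` would fall apart between
`u` and `v` (minimality of `C u v`); by continuity of `C` this separation persists for the segments
between nearby points of `H`, which lie in `H`. -/
theorem isConvexSet_closure (hH : 𝒱.IsConvexSet H) : 𝒱.IsConvexSet (closure H) := by
  have := hY.t2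
  intro V hV u ⟨hu, huV⟩ v ⟨hv, hvV⟩
  have hC := 𝒱.convexity V hV
  refine subset_inter (fun w hw => ?_) (hC.segment_subset u huV v hvV)
  by_contra hwH
  set D := 𝒱.seg V u v ∩ closure H
  have hcomp : v ∉ connectedComponentIn D u := fun hv' => by
    have := hC.minimal u huV v hvV _ ((connectedComponentIn_subset D u).trans inter_subset_left)
      (mem_connectedComponentIn ⟨hC.mem_left u huV v hvV, hu⟩) hv'
      isPreconnected_connectedComponentIn
    exact hwH (connectedComponentIn_subset D u (this ▸ hw)).2
  have hD : IsCompact D := (hY.isCompact_seg hV huV hvV).inter_right isClosed_closure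
  obtain ⟨W₁, W₂, hW₁, hW₂, hW, hDW, huW, hvW⟩ :=
    hD.exists_separation_of_notMem_connectedComponentIn ⟨hC.mem_left u huV v hvV, hu⟩
      ⟨hC.mem_right u huV v hvV, hv⟩ hcomp
  obtain ⟨A, B, hA, hB, huA, hvB, hAB⟩ := hC.continuity u huV v hvV ((closure H)ᶜ ∪ (W₁ ∪ W₂))
    (isClosed_closure.isOpen_compl.union (hW₁.union hW₂)) fun x hx =>
      (em (x ∈ closure H)).elim (fun h => Or.inr (hDW ⟨hx, h⟩)) Or.inl
  obtain ⟨u', ⟨⟨hu'A, hu'W⟩, hu'V⟩, hu'H⟩ :=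
    mem_closure_iff.mp hu _ ((hA.inter hW₁).inter hC.isOpen) ⟨⟨huA, huW⟩, huV⟩
  obtain ⟨v', ⟨⟨hv'B, hv'W⟩, hv'V⟩, hv'H⟩ :=
    mem_closure_iff.mp hv _ ((hB.inter hW₂).inter hC.isOpen) ⟨⟨hvB, hvW⟩, hvV⟩
  have hseg : 𝒱.seg V u' v' ⊆ W₁ ∪ W₂ := fun x hx =>
    ((hAB u' ⟨hu'A, hu'V⟩ v' ⟨hv'B, hv'V⟩ hx).resolve_left
      (not_not.2 (subset_closure (hH.seg_subset 𝒱 hV hu'H hu'V hv'H hv'V hx))))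
  rcases (hC.preconnected u' hu'V v' hv'V).subset_or_subset hW₁ hW₂ hW hseg with h | h
  · exact hW.notMem_of_mem_left (h (hC.mem_right u' hu'V v' hv'V)) hv'W
  · exact hW.notMem_of_mem_left hu'W (h (hC.mem_left u' hu'V v' hv'V))

end IsGeodesicQManifold

namespace LocalConvexityStructure

variable {Y : Type*} [TopologicalSpace Y] (𝒱 : LocalConvexityStructure Y) {V M : Set Y}
  {p q : Y}

def convexContinua (p q : Y) : Set (Set Y) :=
  {A | IsCompact A ∧ IsPreconnected A ∧ p ∈ A ∧ q ∈ A ∧ 𝒱.IsConvexSet A}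

theorem exists_minimal_convexContinua [T2Space Y] {K : Set Y} (hK : K ∈ 𝒱.convexContinua p q) :
    ∃ M, Minimal (· ∈ 𝒱.convexContinua p q) M := by
  refine (zorn_superset_nonempty _ (fun S hS hch ⟨A, hA⟩ => ?_) K hK).imp fun M hM => hM.2
  have : Nonempty S := ⟨⟨A, hA⟩⟩
  refine ⟨⋂₀ S, ⟨?_, ?_, mem_sInter.2 fun B hB => (hS hB).2.2.1,
    mem_sInter.2 fun B hB => (hS hB).2.2.2.1, 𝒱.isConvexSet_sInter fun B hB => (hS hB).2.2.2.2⟩,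
    fun B hB => sInter_subset_of_mem hB⟩
  · exact (hS hA).1.of_isClosed_subset (isClosed_sInter fun B hB => (hS hB).1.isClosed)
      (sInter_subset_of_mem hA)
  · have hdir : DirectedOn (· ⊇ ·) S := fun B hB B' hB' =>
      (hch.total hB hB').elim (fun h => ⟨B, hB, subset_rfl, h⟩) fun h => ⟨B', hB', h, subset_rfl⟩
    rw [sInter_eq_iInter]
    exact isPreconnected_iInter_of_directed hdir.directed_val (fun B => (hS B.2).1)
      (fun B => (hS B.2).2.1)

theorem isEtaleChartTo_subtypeVal (hM : 𝒱.IsConvexSet M) (hV : V ∈ 𝒱.atlas) :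
    IsEtaleChartTo 𝒱 (Subtype.val : M → Y) (Subtype.val ⁻¹' V) V := by
  refine ⟨(𝒱.convexity V hV).isOpen.preimage continuous_subtype_val, Subtype.val_injective.injOn,
    fun W hWV hW => ?_, hV, ?_, ?_⟩
  · obtain ⟨O, hO, rfl⟩ := isOpen_induced_iff.mp hW
    refine ⟨O, hO, ?_⟩
    rw [Subtype.image_preimage_coe, Subtype.image_preimage_coe, ← inter_assoc, inter_comm O M]
    exact (inter_eq_left.2 fun x (hx : x ∈ M ∩ O) => @hWV ⟨x, hx.1⟩ hx.2).symm
  · simp only [Subtype.image_preimage_coe, inter_subset_right]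
  · rw [Subtype.image_preimage_coe]
    exact hM V hV

theorem isEtale_subtypeVal (hMc : IsClosed M) (hMconn : IsConnected M) (hM : 𝒱.IsConvexSet M) :
    IsEtale 𝒱 (Subtype.val : M → Y) where
  continuous := continuous_subtype_val
  connectedSpace := Subtype.connectedSpace hMconn
  isClosedMap := hMc.isClosedEmbedding_subtypeVal.isClosedMap
  charts_cover z := by
    obtain ⟨V, hV, hzV⟩ := 𝒱.covers z
    exact ⟨_, ⟨V, 𝒱.isEtaleChartTo_subtypeVal hM hV⟩, hzV⟩

theorem generates_subtypeVal (hM : Minimal (· ∈ 𝒱.convexContinua p q) M) (hp : p ∈ M)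
    (hq : q ∈ M) : Generates 𝒱 (Subtype.val : M → Y) {⟨p, hp⟩, ⟨q, hq⟩} := by
  have := isCompact_iff_compactSpace.mp hM.prop.1
  rintro ⟨A, hAne, hAc, hApre, hpqA, hAconv⟩
  have hconv : 𝒱.IsConvexSet (Subtype.val '' A) := by
    intro V hV u hu v hv
    have h := hAconv _ ⟨V, 𝒱.isEtaleChartTo_subtypeVal hM.prop.2.2.2.2 hV⟩
    rw [inter_comm, image_inter_preimage] at h
    exact fun x hx => (h V hV u ⟨hu, hu.2⟩ v ⟨hv, hv.2⟩ hx).1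
  have hAM := hM.eq_of_subset ⟨hAc.isCompact.image continuous_subtype_val,
    hApre.image _ continuous_subtype_val.continuousOn, ⟨_, hpqA (mem_insert _ _), rfl⟩,
    ⟨_, hpqA (mem_insert_of_mem _ rfl), rfl⟩, hconv⟩ (image_subset_iff.2 fun x _ => x.2)
  exact hAne (Subtype.val_injective.image_injective (hAM.trans (Subtype.coe_image_univ M).symm))

def geodesicOfMinimal [T2Space Y] (hM : Minimal (· ∈ 𝒱.convexContinua p q) M) :
    GeodesicConnecting 𝒱 p q where
  Z := M
  e := Subtype.val
  x := ⟨p, hM.prop.2.2.1⟩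
  y := ⟨q, hM.prop.2.2.2.1⟩
  compact := isCompact_iff_compactSpace.mp hM.prop.1
  etale := 𝒱.isEtale_subtypeVal hM.prop.1.isClosed ⟨⟨p, hM.prop.2.2.1⟩, hM.prop.2.1⟩
    hM.prop.2.2.2.2
  generates := 𝒱.generates_subtypeVal hM _ _
  endpoint_left := rfl
  endpoint_right := rfl

end LocalConvexityStructure

theorem IsGeodesicQManifold.nonempty_geodesicConnecting {Y : Type*} [TopologicalSpace Y]
    {𝒱 : LocalConvexityStructure Y} (hY : IsGeodesicQManifold 𝒱) {p q : Y}
    (h : 𝒱.HullConnected p q) : Nonempty (GeodesicConnecting 𝒱 p q) := by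
  have := hY.t2
  obtain ⟨F, hF, hpF, hqF, hFc⟩ := h
  obtain ⟨M, hM⟩ := 𝒱.exists_minimal_convexContinua (K := closure (𝒱.hull F))
    ⟨hY.hull_compact F hF, hFc.closure, subset_closure (𝒱.subset_hull F hpF),
      subset_closure (𝒱.subset_hull F hqF), hY.isConvexSet_closure (𝒱.isConvexSet_hull F)⟩
  exact ⟨𝒱.geodesicOfMinimal hM⟩

theorem stmt_18_general {X : Type u} {Y : Type v} [TopologicalSpace X] [TopologicalSpace Y]
    [ConnectedSpace X] (𝒱 : LocalConvexityStructure Y) (hY : IsGeodesicQManifold 𝒱)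
    (f : X → Y) (hlc : IsLocallyConvexMap 𝒱 f) :
    𝒱.WeaklyConvex (Set.range f) := by
  rintro _ ⟨x, rfl⟩ _ ⟨y, rfl⟩
  refine hY.nonempty_geodesicConnecting <|
    PreconnectedSpace.induction₂' (fun x y => 𝒱.HullConnected (f x) (f y)) (fun x => ?_)
      ⟨fun _ _ _ => LocalConvexityStructure.HullConnected.trans⟩ x y
  obtain ⟨U, hU, hxU, -, V, hV, hfU, -⟩ := hlc x
  filter_upwards [hU.mem_nhds hxU] with y hy
  have hfx : f x ∈ V := hfU (mem_image_of_mem f hxU)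
  have hfy : f y ∈ V := hfU (mem_image_of_mem f hy)
  exact ⟨LocalConvexityStructure.hullConnected_of_mem_chart hV hfx hfy,
    LocalConvexityStructure.hullConnected_of_mem_chart hV hfy hfx⟩

/-- Theorem 3, the Lokal-global-Prinzip: Let `f : X → Y` be a locally
convex continuous map from a connected topological space `X` to a geodesic q-manifold `Y`,
and assume that the induced map `f# : X^f → Y` is a closed map.  Then the image `f(X)` is
weakly convex: any two points of `f(X)` are the end points of some geodesic in `Y`. -/
theorem stmt_18 {X : Type u} {Y : Type v} [TopologicalSpace X] [TopologicalSpace Y]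
    [ConnectedSpace X] (𝒱 : LocalConvexityStructure Y) (hY : IsGeodesicQManifold 𝒱)
    (f : X → Y) (hf : Continuous f) (hlc : IsLocallyConvexMap 𝒱 f)
    (hcl : IsClosedMap (fSharp f)) :
    𝒱.WeaklyConvex (Set.range f) :=
  stmt_18_general 𝒱 hY f hlc
end
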